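/- arXiv:2602.23149 — 7 statements merged into one kernel-verified Lean document; each statement's English description precedes it below -/
import Mathlib

section
/- Almost surely, the set {n ∈ ℕ : κ_n = ∞} is infinite; moreover, denoting by N_0 < N_1 < N_2 < … its increasing enumeration, the random blocks Ψ_k := (N_{k+1} − N_k, (Y_{N_k}, Y_{N_k+1}, …, Y_{N_{k+1}−1})) for k ∈ ℕ, viewed as random elements of the measurable disjoint union ⨆_{m ≥ 1} ({m} × E^m), are independent and identically distributed, each with the law of (N_1, (Y_0, Y_1, …, Y_{N_1−1})) under the conditional probability measure ℙ(· | κ_0 = ∞). -/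
/-!
Write `N_0 < N_1 < ⋯` for the renewal times and `Ψ_k` for the blocks. By (ii), on `{κ_n = ∞}` a
time `j ≤ n` is a renewal time iff `n ≤ κ_j`, which is decided at time `n - 1`. Hence, for fixed
`s_0 < ⋯ < s_k = n`, the event `{(N_0, …, N_k) = s, Ψ_0 ∈ B_0, …, Ψ_{k-1} ∈ B_{k-1}}` is an
`ℱ_{n-1}`-event intersected with `{κ_n = ∞}`, while `Ψ_k` is the first block of the process
seen from time `n`. Assumption (iii) factors the probability, and summing over `s` gives
`ℙ(Ψ_i ∈ B_i ∀ i < k, Ψ_k ∈ b) = ℙ(Ψ_i ∈ B_i ∀ i < k) · ℙ(Ψ_0 ∈ b | κ_0 = ∞)`,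
which is independence with the claimed common law.

Infinitely many renewals: by (iii), `ℙ(κ_{n+1} = ∞ | ℱ_n) = ℙ(κ_0 = ∞) > 0`, so
`ℙ(no renewal after m | ℱ_n) ≤ 1 - ℙ(κ_0 = ∞)` for `n ≥ m`; by Lévy's upward theorem these
conditional probabilities tend to the indicator of that event, which therefore vanishes a.s.
-/

open MeasureTheory ProbabilityTheory Set Filter

namespace Nat

variable {p : ℕ → Prop}

/-- The second alternative is the junk value of `nth p k` when `p` holds for at most `k`
numbers. -/
theorem nth_eq_iff_count [DecidablePred p] {k r : ℕ} :
    nth p k = r ↔ (p r ∧ count p r = k) ∨ (r = 0 ∧ ∀ n, ¬(p n ∧ count p n = k)) := by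
  constructor
  · rintro rfl
    by_cases hk : ∀ hf : (Set.ofPred p).Finite, k < hf.toFinset.card
    · exact Or.inl ⟨nth_mem k hk, count_nth hk⟩
    · refine Or.inr ⟨?_, fun n ⟨hn, hcn⟩ => hk fun hf => hcn ▸ count_lt_card hf hn⟩
      push Not at hk
      obtain ⟨hf, hle⟩ := hk
      exact nth_of_card_le hf hle
  · rintro (⟨hr, rfl⟩ | ⟨rfl, h⟩)
    · exact nth_count hr
    · by_contra hne
      have hk := lt_card_toFinset_of_nth_ne_zero hne
      exact h _ ⟨nth_mem _ hk, count_nth hk⟩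

theorem nth_add_eq_add_nth (hp : {n | p n}.Infinite) {k n : ℕ} (h : nth p k = n) (i : ℕ) :
    nth p (k + i) = n + nth (fun r => p (n + r)) i := by
  classical
  have hp' : {r | p (n + r)}.Infinite := by
    rw [← Nat.frequently_atTop_iff_infinite] at hp ⊢
    rw [← map_add_atTop_eq_nat n, frequently_map] at hp
    simpa only [add_comm] using hp
  have hcount : count p (n + nth (fun r => p (n + r)) i) = k + i := by
    rw [count_add, count_nth_of_infinite hp', ← h, count_nth_of_infinite hp]
  rw [← hcount, nth_count (nth_mem_of_infinite hp' i)]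

theorem nth_eq_of_forall_le_iff_mem_range {k : ℕ} {s : Fin (k + 1) → ℕ} (hs : StrictMono s)
    (h : ∀ j ≤ s (Fin.last k), (p j ↔ j ∈ range s)) (i : Fin (k + 1)) : nth p i = s i := by
  classical
  have hps : ∀ i', p (s i') := fun i' => (h _ (hs.monotone (Fin.le_last i'))).2 ⟨i', rfl⟩
  suffices hcount : count p (s i) = i by rw [← hcount, nth_count (hps i)]
  have hfilter : {x ∈ Finset.range (s i) | p x} = (Finset.Iio i).image s := by
    ext x
    simp only [Finset.mem_filter, Finset.mem_range, Finset.mem_image, Finset.mem_Iio]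
    constructor
    · rintro ⟨hx, hpx⟩
      obtain ⟨i', rfl⟩ := (h x (hx.le.trans (hs.monotone (Fin.le_last i)))).1 hpx
      exact ⟨i', hs.lt_iff_lt.1 hx, rfl⟩
    · rintro ⟨i', hi', rfl⟩
      exact ⟨hs hi', hps i'⟩
  rw [count_eq_card_filter_range, hfilter, Finset.card_image_of_injective _ hs.injective,
    Fin.card_Iio]

theorem forall_nth_eq_iff {k : ℕ} {s : Fin (k + 1) → ℕ} (hp : {n | p n}.Infinite)
    (hs : StrictMono s) :
    (∀ i : Fin (k + 1), nth p i = s i) ↔ ∀ j ≤ s (Fin.last k), (p j ↔ j ∈ range s) := by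
  classical
  refine ⟨fun h j hj => ⟨fun hpj => ?_, ?_⟩, nth_eq_of_forall_le_iff_mem_range hs⟩
  · have hcount : count p j < k + 1 := by
      have := count_monotone p (h (Fin.last k) ▸ hj)
      rw [count_nth_of_infinite hp] at this
      simpa using Nat.lt_succ_of_le this
    exact ⟨⟨count p j, hcount⟩, (h _).symm.trans (nth_count hpj)⟩
  · rintro ⟨i, rfl⟩
    exact h i ▸ nth_mem_of_infinite hp i

end Nat

section Measurability

variable {α : Type*} [MeasurableSpace α]

theorem measurable_sigmaMk {ι : Type*} {β : ι → Type*} [∀ i, MeasurableSpace (β i)] (i : ι) :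
    Measurable (Sigma.mk i : β i → Sigma β) :=
  measurable_iff_le_map.2 (iInf_le _ i)

theorem measurable_count {p : α → ℕ → Prop} [∀ a, DecidablePred (p a)]
    (hp : ∀ n, MeasurableSet {a | p a n}) (n : ℕ) : Measurable fun a => Nat.count (p a) n := by
  induction n with
  | zero => simp only [Nat.count_zero, measurable_const]
  | succ n ih =>
    simp only [Nat.count_succ]
    exact ih.add (Measurable.ite (hp n) measurable_const measurable_const)

theorem measurable_nth {p : α → ℕ → Prop}
    (hp : ∀ n, MeasurableSet {a | p a n}) (k : ℕ) : Measurable fun a => Nat.nth (p a) k := by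
  classical
  refine measurable_to_countable' fun r => ?_
  have hcount : ∀ n, MeasurableSet {a | p a n ∧ Nat.count (p a) n = k} := fun n =>
    (hp n).inter (measurable_count hp n (measurableSet_singleton k))
  have hpreimage : (fun a => Nat.nth (p a) k) ⁻¹' {r} = {a | p a r ∧ Nat.count (p a) r = k} ∪
      ({_a | r = 0} ∩ ⋂ n, {a | p a n ∧ Nat.count (p a) n = k}ᶜ) := by
    ext a
    simp [Nat.nth_eq_iff_count]
  rw [hpreimage]
  exact (hcount r).union ((MeasurableSet.const _).inter (.iInter fun n => (hcount n).compl))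

end Measurability

section

variable {Ω : Type*} {mΩ : MeasurableSpace Ω} {μ : Measure Ω} {ℱ : Filtration ℕ mΩ}

/-- `ℕ∞` carries the discrete σ-algebra, while the stopping-time API measures `WithTop ℕ` with its
Borel σ-algebra. -/
theorem MeasureTheory.IsStoppingTime.measurable_iSup_enat {τ : Ω → ℕ∞}
    (hτ : IsStoppingTime ℱ τ) : Measurable[⨆ n, ℱ n] τ :=
  fun s _ => hτ.measurable_iSup (s.to_countable.measurableSet (α := WithTop ℕ))

theorem MeasureTheory.IsStoppingTime.measurableSet_add_one_le {τ : Ω → ℕ∞}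
    (hτ : IsStoppingTime ℱ τ) (n : ℕ) : MeasurableSet[ℱ n] {ω | ((n + 1 : ℕ) : ℕ∞) ≤ τ ω} := by
  simp only [Nat.cast_add, Nat.cast_one, ENat.add_one_le_iff (ENat.natCast_ne_top n)]
  exact hτ.measurableSet_gt n

theorem measure_inter_eq_mul_of_condExp_indicator_ae_eq {m : MeasurableSpace Ω} (hm : m ≤ mΩ)
    [IsFiniteMeasure μ] {s t A : Set Ω} (hs : MeasurableSet[mΩ] s)
    (h : μ[s.indicator (1 : Ω → ℝ) | m] =ᵐ[μ] fun _ => μ.real t) (hA : MeasurableSet[m] A) :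
    μ (A ∩ s) = μ A * μ t := by
  have hint : Integrable (s.indicator (1 : Ω → ℝ)) μ := (integrable_const 1).indicator hs
  have key := setIntegral_condExp hm hint hA
  rw [setIntegral_congr_ae (hm A hA) (h.mono fun ω hω _ => hω), setIntegral_const,
    integral_indicator_one hs, measureReal_restrict_apply hs, smul_eq_mul, inter_comm] at key
  rw [← ENNReal.toReal_eq_toReal_iff' (measure_ne_top _ _) (by finiteness), ENNReal.toReal_mul]
  exact key.symm

theorem measure_eq_zero_of_condExp_indicator_le [IsFiniteMeasure μ] {s : Set Ω}
    (hs : MeasurableSet[⨆ n, ℱ n] s) {c : ℝ} (hc : c < 1) {N : ℕ}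
    (h : ∀ n ≥ N, μ[s.indicator (1 : Ω → ℝ) | ℱ n] ≤ᵐ[μ] fun _ => c) : μ s = 0 := by
  have hlim : μ[s.indicator (1 : Ω → ℝ) | ⨆ n, ℱ n] = s.indicator 1 :=
    condExp_of_stronglyMeasurable (iSup_le ℱ.le) (stronglyMeasurable_one.indicator hs)
      ((integrable_const 1).indicator (iSup_le ℱ.le _ hs))
  have hle : ∀ᵐ ω ∂μ, ∀ n, μ[s.indicator 1 | ℱ (n + N)] ω ≤ c :=
    ae_all_iff.2 fun n => h _ (by omega)
  rw [measure_eq_zero_iff_ae_notMem]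
  filter_upwards [tendsto_ae_condExp (μ := μ) (ℱ := ℱ) (s.indicator (1 : Ω → ℝ)), hle]
    with ω hω hωc hωs
  have hlimω := le_of_tendsto' (hω.comp (tendsto_add_atTop_nat N)) hωc
  simp [hlim, hωs] at hlimω
  linarith

/-- Unlike in `MeasureTheory.ae_mem_limsup_atTop_iff`, the events need not be adapted:
`H (n + 1)` is only `⨆ n, ℱ n`-measurable. -/
theorem ae_infinite_of_condExp_indicator_eq [IsProbabilityMeasure μ] {H : ℕ → Set Ω}
    (hH : ∀ n, MeasurableSet[⨆ n, ℱ n] (H n)) {c : ℝ} (hc : 0 < c)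
    (h : ∀ n, μ[(H (n + 1)).indicator (1 : Ω → ℝ) | ℱ n] =ᵐ[μ] fun _ => c) :
    ∀ᵐ ω ∂μ, {n | ω ∈ H n}.Infinite := by
  have hmeas : ∀ n, MeasurableSet (H n) := fun n => iSup_le ℱ.le _ (hH n)
  have hnull : ∀ m, μ {ω | ∀ j ≥ m, ω ∉ H j} = 0 := by
    intro m
    have hB : MeasurableSet[⨆ n, ℱ n] {ω | ∀ j ≥ m, ω ∉ H j} := by
      simp only [ofPred_forall]
      exact .iInter fun j => .iInter fun _ => (hH j).compl
    refine measure_eq_zero_of_condExp_indicator_le hB (c := 1 - c) (by linarith) (N := m)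
      fun n hn => ?_
    have hle : {ω | ∀ j ≥ m, ω ∉ H j}.indicator (1 : Ω → ℝ) ≤ᵐ[μ] 1 - (H (n + 1)).indicator 1 := by
      refine Eventually.of_forall fun ω => ?_
      by_cases hω : ω ∈ H (n + 1)
      · have : ω ∉ {ω | ∀ j ≥ m, ω ∉ H j} := fun h' => h' (n + 1) (by omega) hω
        simp [hω, this]
      · by_cases hω' : ω ∈ {ω | ∀ j ≥ m, ω ∉ H j} <;> simp [hω, hω', indicator_of_notMem]
    have hint : Integrable ((H (n + 1)).indicator (1 : Ω → ℝ)) μ :=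
      (integrable_const 1).indicator (hmeas _)
    filter_upwards [condExp_mono (m := ℱ n) ((integrable_const 1).indicator (iSup_le ℱ.le _ hB))
      ((integrable_const 1).sub hint) hle, condExp_sub (integrable_const 1) hint (ℱ n), h n]
      with ω h1 h2 h3
    rw [h2, Pi.sub_apply, h3, condExp_const (ℱ.le n)] at h1
    exact h1
  rw [ae_iff]
  refine measure_mono_null (fun ω hω => ?_) (measure_iUnion_null hnull)
  obtain ⟨b, hb⟩ := (not_infinite.1 hω).bddAbove
  exact mem_iUnion.2 ⟨b + 1, fun j hj hjH => absurd (hb hjH) (by omega)⟩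

end

section

variable {Ω β : Type*} {mΩ : MeasurableSpace Ω} [MeasurableSpace β] {μ : Measure Ω}

theorem measure_eq_tsum_inter_preimage_singleton [Countable β] [MeasurableSingletonClass β]
    {f : Ω → β} (hf : Measurable f) (S : Set Ω) : μ S = ∑' b, μ (S ∩ f ⁻¹' {b}) := by
  calc μ S = μ.restrict S (⋃ b, f ⁻¹' {b}) := by
        rw [← preimage_iUnion, iUnion_of_singleton, preimage_univ, Measure.restrict_apply_univ]
    _ = ∑' b, μ (S ∩ f ⁻¹' {b}) := by
        rw [measure_iUnion (pairwise_disjoint_fiber f) fun b => hf (measurableSet_singleton b)]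
        simp_rw [Measure.restrict_apply (hf (measurableSet_singleton _)), inter_comm]

variable [IsProbabilityMeasure μ] {Ψ : ℕ → Ω → β} {ρ : Measure β}

theorem measure_forall_lt_mem_eq_prod
    (h : ∀ k (B : ℕ → Set β), (∀ i, MeasurableSet (B i)) → ∀ b, MeasurableSet b →
      μ ({ω | ∀ i < k, Ψ i ω ∈ B i} ∩ Ψ k ⁻¹' b) = μ {ω | ∀ i < k, Ψ i ω ∈ B i} * ρ b)
    {B : ℕ → Set β} (hB : ∀ i, MeasurableSet (B i)) (k : ℕ) :
    μ {ω | ∀ i < k, Ψ i ω ∈ B i} = ∏ i ∈ Finset.range k, ρ (B i) := by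
  induction k with
  | zero => simp
  | succ k ih =>
    have hsucc : {ω | ∀ i < k + 1, Ψ i ω ∈ B i} = {ω | ∀ i < k, Ψ i ω ∈ B i} ∩ Ψ k ⁻¹' B k := by
      ext ω
      simp only [mem_ofPred_eq, mem_inter_iff, mem_preimage, Nat.lt_succ_iff_lt_or_eq, or_imp,
        forall_and, forall_eq]
    rw [hsucc, h k B hB (B k) (hB k), ih, Finset.prod_range_succ]

theorem map_eq_of_measure_inter_eq (hΨ : ∀ k, Measurable (Ψ k))
    (h : ∀ k (B : ℕ → Set β), (∀ i, MeasurableSet (B i)) → ∀ b, MeasurableSet b →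
      μ ({ω | ∀ i < k, Ψ i ω ∈ B i} ∩ Ψ k ⁻¹' b) = μ {ω | ∀ i < k, Ψ i ω ∈ B i} * ρ b)
    (k : ℕ) : μ.map (Ψ k) = ρ := by
  ext b hb
  simpa [Measure.map_apply (hΨ k) hb] using h k (fun _ => univ) (fun _ => .univ) b hb

theorem iIndepFun_of_measure_inter_eq (hΨ : ∀ k, Measurable (Ψ k))
    (h : ∀ k (B : ℕ → Set β), (∀ i, MeasurableSet (B i)) → ∀ b, MeasurableSet b →
      μ ({ω | ∀ i < k, Ψ i ω ∈ B i} ∩ Ψ k ⁻¹' b) = μ {ω | ∀ i < k, Ψ i ω ∈ B i} * ρ b) :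
    iIndepFun Ψ μ := by
  classical
  have hmap := map_eq_of_measure_inter_eq hΨ h
  have hρ : ρ univ = 1 := by
    rw [← hmap 0, Measure.map_apply (hΨ 0) .univ, preimage_univ, measure_univ]
  rw [iIndepFun_iff_measure_inter_preimage_eq_mul]
  intro T sets hsets
  let B i := if i ∈ T then sets i else univ
  have hB : ∀ i, MeasurableSet (B i) := fun i => by
    by_cases hi : i ∈ T <;> simp [B, hi, hsets]
  have hT : T ⊆ Finset.range (T.sup id + 1) := fun i hi =>
    Finset.mem_range.2 (Nat.lt_succ_of_le (Finset.le_sup (f := id) hi))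
  have hinter : ⋂ i ∈ T, Ψ i ⁻¹' sets i = {ω | ∀ i < T.sup id + 1, Ψ i ω ∈ B i} := by
    ext ω
    simp only [mem_iInter, mem_preimage, mem_ofPred_eq]
    refine ⟨fun hω i _ => ?_, fun hω i hi => ?_⟩
    · by_cases hi : i ∈ T <;> simp [B, hi, hω]
    · simpa [B, hi] using hω i (Finset.mem_range.1 (hT hi))
  rw [hinter, measure_forall_lt_mem_eq_prod h hB,
    ← Finset.prod_subset hT fun i _ hi => by simp [B, hi, hρ]]
  refine Finset.prod_congr rfl fun i hi => ?_
  rw [← hmap i, show B i = sets i from if_pos hi, Measure.map_apply (hΨ i) (hsets i hi)]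

end

namespace Renewal

section Block

variable {α E : Type*}

noncomputable def block (p : ℕ → Prop) (y : ℕ → E) (k : ℕ) : Σ m, Fin m → E :=
  ⟨Nat.nth p (k + 1) - Nat.nth p k, fun j => y (Nat.nth p k + j)⟩

theorem block_congr {p q : ℕ → Prop} (y : ℕ → E) {k : ℕ} (h₀ : Nat.nth p k = Nat.nth q k)
    (h₁ : Nat.nth p (k + 1) = Nat.nth q (k + 1)) : block p y k = block q y k := by
  rw [block, block, h₀, h₁]

theorem block_zero_of_zero {p : ℕ → Prop} (y : ℕ → E) (h : p 0) :
    block p y 0 = ⟨Nat.nth p 1, fun j => y j⟩ := by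
  rw [block, Nat.nth_zero_of_zero h]
  simp only [Nat.sub_zero, zero_add]

theorem block_add {p : ℕ → Prop} (y : ℕ → E) (hp : {n | p n}.Infinite) {k n : ℕ}
    (h : Nat.nth p k = n) (i : ℕ) :
    block p y (k + i) = block (fun r => p (n + r)) (fun r => y (n + r)) i := by
  rw [block, block, Nat.nth_add_eq_add_nth hp h, add_assoc k i 1, Nat.nth_add_eq_add_nth hp h]
  simp only [add_assoc]
  rw [Nat.add_sub_add_left]

theorem measurable_block [MeasurableSpace α] [MeasurableSpace E] {p : α → ℕ → Prop}
    {y : α → ℕ → E} (hp : ∀ n, MeasurableSet {a | p a n}) (hy : ∀ n, Measurable fun a => y a n)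
    (k : ℕ) : Measurable fun a => block (p a) (y a) k := by
  let G : α × (ℕ × ℕ) → Σ m, Fin m → E := fun x => ⟨x.2.2 - x.2.1, fun j => y x.1 (x.2.1 + j)⟩
  have hG : Measurable G := measurable_from_prod_countable_left fun t =>
    (measurable_sigmaMk (t.2 - t.1)).comp
      (measurable_pi_lambda (fun a (j : Fin (t.2 - t.1)) => y a (t.1 + j)) fun j => hy _)
  exact hG.comp (measurable_id.prodMk ((measurable_nth hp k).prodMk (measurable_nth hp (k + 1))))

theorem measurable_block_of_le {m : MeasurableSpace α} [MeasurableSpace E] (q : ℕ → Prop)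
    {y : ℕ → α → E} {n i : ℕ} (hy : ∀ j < n, Measurable (y j)) (hi : Nat.nth q (i + 1) ≤ n) :
    Measurable fun a => block q (fun j => y j a) i :=
  (measurable_sigmaMk _).comp (measurable_pi_lambda _ fun j => hy _ (by have := j.isLt; omega))

end Block

variable {Ω E : Type*} {κ : ℕ → Ω → ℕ∞} {Y : ℕ → Ω → E}

/-- The process `(Y_{n+k}, κ̂_{n+k})_k` of assumption (iii). -/
def shifted (κ : ℕ → Ω → ℕ∞) (Y : ℕ → Ω → E) (n : ℕ) (ω : Ω) : ℕ → E × ℕ∞ :=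
  fun k => (Y (n + k) ω, κ (n + k) ω - ((n + k : ℕ) : ℕ∞))

noncomputable def firstBlock (x : ℕ → E × ℕ∞) : Σ m, Fin m → E :=
  block (fun r => (x r).2 = ⊤) (fun r => (x r).1) 0

noncomputable def renewalBlock (κ : ℕ → Ω → ℕ∞) (Y : ℕ → Ω → E) (k : ℕ) (ω : Ω) :
    Σ m, Fin m → E :=
  block (fun n => κ n ω = ⊤) (fun n => Y n ω) k

noncomputable def firstRenewals (κ : ℕ → Ω → ℕ∞) (k : ℕ) (ω : Ω) : Fin (k + 1) → ℕ :=
  fun i => Nat.nth (fun n => κ n ω = ⊤) i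

/-- The renewal pattern up to `s (last k)` and the first `k` blocks are those of the renewal times
`s`, as far as can be seen at time `s (last k) - 1`; on `{κ (s (last k)) = ⊤}` this is the event
`firstRenewals κ k = s` (`firstRenewals_eq_iff`). -/
def pastEvent (κ : ℕ → Ω → ℕ∞) (Y : ℕ → Ω → E) (B : ℕ → Set (Σ m, Fin m → E)) {k : ℕ}
    (s : Fin (k + 1) → ℕ) : Set Ω :=
  {ω | (∀ j ≤ s (Fin.last k), ((s (Fin.last k) : ℕ∞) ≤ κ j ω ↔ j ∈ range s)) ∧
    ∀ i < k, block (· ∈ range s) (fun j => Y j ω) i ∈ B i}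

theorem shifted_zero (ω : Ω) : shifted κ Y 0 ω = fun k => (Y k ω, κ k ω - (k : ℕ∞)) := by
  funext k
  simp only [shifted, zero_add]

theorem firstBlock_shifted (n : ℕ) (ω : Ω) :
    firstBlock (shifted κ Y n ω) = block (fun r => κ (n + r) ω = ⊤) (fun r => Y (n + r) ω) 0 := by
  simp only [firstBlock, shifted, ENat.sub_eq_top_iff, ne_eq, ENat.natCast_ne_top,
    not_false_eq_true, and_true]

theorem renewalBlock_zero_eq_firstBlock (ω : Ω) :
    renewalBlock κ Y 0 ω = firstBlock (shifted κ Y 0 ω) := by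
  simp only [firstBlock_shifted, zero_add, renewalBlock]

theorem renewalBlock_eq_firstBlock_shifted {ω : Ω} (hinf : {n | κ n ω = ⊤}.Infinite) {k n : ℕ}
    (h : Nat.nth (fun n => κ n ω = ⊤) k = n) :
    renewalBlock κ Y k ω = firstBlock (shifted κ Y n ω) := by
  rw [firstBlock_shifted]
  exact block_add (fun n => Y n ω) hinf h 0

theorem eq_top_iff_le_of_eq_top
    (h_ii : ∀ (m n : ℕ) (ω : Ω), m < n → (n : ℕ∞) ≤ κ m ω → κ n ω ≤ κ m ω) {ω : Ω} {j n : ℕ}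
    (hn : κ n ω = ⊤) (hj : j ≤ n) : κ j ω = ⊤ ↔ (n : ℕ∞) ≤ κ j ω := by
  refine ⟨fun h => h ▸ le_top, fun h => ?_⟩
  rcases hj.lt_or_eq with hlt | rfl
  · exact top_le_iff.1 (hn ▸ h_ii j n ω hlt h)
  · exact hn

theorem firstRenewals_eq_iff
    (h_ii : ∀ (m n : ℕ) (ω : Ω), m < n → (n : ℕ∞) ≤ κ m ω → κ n ω ≤ κ m ω) {ω : Ω}
    (hinf : {n | κ n ω = ⊤}.Infinite) {k : ℕ} {s : Fin (k + 1) → ℕ} (hs : StrictMono s) :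
    firstRenewals κ k ω = s ↔
      (∀ j ≤ s (Fin.last k), ((s (Fin.last k) : ℕ∞) ≤ κ j ω ↔ j ∈ range s)) ∧
        κ (s (Fin.last k)) ω = ⊤ := by
  rw [funext_iff]
  refine (Nat.forall_nth_eq_iff hinf hs).trans ⟨fun h => ?_, fun ⟨hpast, hn⟩ j hj => ?_⟩
  · have hn : κ (s (Fin.last k)) ω = ⊤ := (h _ le_rfl).2 ⟨_, rfl⟩
    exact ⟨fun j hj => (eq_top_iff_le_of_eq_top h_ii hn hj).symm.trans (h j hj), hn⟩
  · exact (eq_top_iff_le_of_eq_top h_ii hn hj).trans (hpast j hj)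

theorem renewalBlock_eq_of_firstRenewals_eq {ω : Ω} {k : ℕ} {s : Fin (k + 1) → ℕ}
    (h : firstRenewals κ k ω = s) (hs : StrictMono s) {i : ℕ} (hi : i < k) :
    renewalBlock κ Y i ω = block (· ∈ range s) (fun j => Y j ω) i := by
  have hnth : ∀ i' (hi' : i' < k + 1),
      Nat.nth (fun n => κ n ω = ⊤) i' = Nat.nth (· ∈ range s) i' := fun i' hi' =>
    (congrFun h ⟨i', hi'⟩).trans
      (Nat.nth_eq_of_forall_le_iff_mem_range hs (fun _ _ => Iff.rfl) ⟨i', hi'⟩).symm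
  exact block_congr _ (hnth i (by omega)) (hnth (i + 1) (by omega))

theorem mem_inter_firstRenewals_preimage_iff
    (h_ii : ∀ (m n : ℕ) (ω : Ω), m < n → (n : ℕ∞) ≤ κ m ω → κ n ω ≤ κ m ω) {ω : Ω}
    (hinf : {n | κ n ω = ⊤}.Infinite) {k : ℕ} {s : Fin (k + 1) → ℕ} (hs : StrictMono s)
    (B : ℕ → Set (Σ m, Fin m → E)) (b : Set (Σ m, Fin m → E)) :
    ω ∈ {ω | ∀ i < k, renewalBlock κ Y i ω ∈ B i} ∩ renewalBlock κ Y k ⁻¹' b ∩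
        firstRenewals κ k ⁻¹' {s} ↔
      ω ∈ pastEvent κ Y B s ∩
        ({ω | κ (s (Fin.last k)) ω = ⊤} ∩ shifted κ Y (s (Fin.last k)) ⁻¹' (firstBlock ⁻¹' b)) := by
  simp only [pastEvent, mem_inter_iff, mem_preimage, mem_singleton_iff, mem_ofPred_eq]
  constructor
  · rintro ⟨⟨hW, hb⟩, hT⟩
    obtain ⟨hpast, hn⟩ := (firstRenewals_eq_iff h_ii hinf hs).1 hT
    refine ⟨⟨hpast, fun i hi => renewalBlock_eq_of_firstRenewals_eq hT hs hi ▸ hW i hi⟩, hn, ?_⟩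
    rwa [← renewalBlock_eq_firstBlock_shifted (k := k) hinf (congrFun hT (Fin.last k))]
  · rintro ⟨⟨hpast, hG⟩, hn, hb⟩
    have hT := (firstRenewals_eq_iff h_ii hinf hs).2 ⟨hpast, hn⟩
    refine ⟨⟨fun i hi => (renewalBlock_eq_of_firstRenewals_eq hT hs hi).symm ▸ hG i hi, ?_⟩, hT⟩
    rwa [renewalBlock_eq_firstBlock_shifted (k := k) hinf (congrFun hT (Fin.last k))]

section Measurability

variable [MeasurableSpace E] {mΩ : MeasurableSpace Ω} {μ : Measure Ω} {ℱ : Filtration ℕ mΩ}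

/-- Assumption (iii), integrated over the events of `ℱ n`. -/
def HasRenewalProperty (μ : Measure Ω) (ℱ : Filtration ℕ mΩ) (κ : ℕ → Ω → ℕ∞)
    (Y : ℕ → Ω → E) : Prop :=
  ∀ n A, MeasurableSet[ℱ n] A → ∀ C : Set (ℕ → E × ℕ∞), MeasurableSet C →
    μ (A ∩ ({ω | κ (n + 1) ω = ⊤} ∩ shifted κ Y (n + 1) ⁻¹' C)) =
      μ A * μ ({ω | κ 0 ω = ⊤} ∩ shifted κ Y 0 ⁻¹' C)

theorem measurable_shifted (hκ : ∀ n, Measurable (κ n)) (hY : ∀ n, Measurable (Y n)) (n : ℕ) :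
    Measurable (shifted κ Y n) :=
  measurable_pi_lambda _ fun k => (hY _).prodMk
    ((Measurable.of_discrete (f := fun t : ℕ∞ => t - ((n + k : ℕ) : ℕ∞))).comp (hκ _))

theorem measurable_firstBlock : Measurable (firstBlock (E := E)) :=
  measurable_block
    (fun n => (measurable_snd.comp (measurable_pi_apply n)) (measurableSet_singleton ⊤))
    (fun n => measurable_fst.comp (measurable_pi_apply n)) 0

theorem measurable_renewalBlock (hκ : ∀ n, Measurable (κ n)) (hY : ∀ n, Measurable (Y n))
    (k : ℕ) : Measurable (renewalBlock κ Y k) :=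
  measurable_block (fun n => hκ n (measurableSet_singleton ⊤)) hY k

theorem measurable_firstRenewals (hκ : ∀ n, Measurable (κ n)) (k : ℕ) :
    Measurable (firstRenewals κ k) :=
  measurable_pi_lambda _ fun i => measurable_nth (fun n => hκ n (measurableSet_singleton ⊤)) i

theorem measurableSet_pastEvent (hκ_stop : ∀ i, IsStoppingTime ℱ (κ i))
    (hY_adapted : ∀ n : ℕ, Measurable[ℱ n] (Y n)) {k n : ℕ} {s : Fin (k + 1) → ℕ}
    (hs : StrictMono s) (hn : s (Fin.last k) = n + 1) {B : ℕ → Set (Σ m, Fin m → E)}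
    (hB : ∀ i, MeasurableSet (B i)) : MeasurableSet[ℱ n] (pastEvent κ Y B s) := by
  rw [pastEvent, ofPred_and]
  refine .inter ?_ ?_
  · rw [hn]
    simp only [ofPred_forall]
    refine .iInter fun j => .iInter fun _ => ?_
    by_cases hj : j ∈ range s
    · simp only [hj, iff_true]
      exact (hκ_stop j).measurableSet_add_one_le n
    · simp only [hj, iff_false]
      exact ((hκ_stop j).measurableSet_add_one_le n).compl
  · simp only [ofPred_forall]
    refine .iInter fun i => .iInter fun hi => measurable_block_of_le (m := ℱ n) _ (n := n + 1)
      (fun j hj => (hY_adapted j).mono (ℱ.mono (by omega)) le_rfl) ?_ (hB i)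
    rw [Nat.nth_eq_of_forall_le_iff_mem_range hs (fun _ _ => Iff.rfl) ⟨i + 1, by omega⟩, ← hn]
    exact hs.monotone (Fin.le_last _)

theorem measure_pastEvent_inter [IsProbabilityMeasure μ] (hren : HasRenewalProperty μ ℱ κ Y)
    (hκ_stop : ∀ i, IsStoppingTime ℱ (κ i)) (hY_adapted : ∀ n : ℕ, Measurable[ℱ n] (Y n))
    {k : ℕ} {s : Fin (k + 1) → ℕ} (hs : StrictMono s) {B : ℕ → Set (Σ m, Fin m → E)}
    (hB : ∀ i, MeasurableSet (B i)) {C : Set (ℕ → E × ℕ∞)} (hC : MeasurableSet C) :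
    μ (pastEvent κ Y B s ∩
        ({ω | κ (s (Fin.last k)) ω = ⊤} ∩ shifted κ Y (s (Fin.last k)) ⁻¹' C)) =
      μ (pastEvent κ Y B s) * μ ({ω | κ 0 ω = ⊤} ∩ shifted κ Y 0 ⁻¹' C) := by
  rcases Nat.eq_zero_or_eq_succ_pred (s (Fin.last k)) with hn | hn
  · have hk : k = 0 := by
      by_contra hk
      have := hs (show (0 : Fin (k + 1)) < Fin.last k by rw [Fin.lt_def]; simp; omega)
      omega
    subst hk
    have huniv : pastEvent κ Y B s = univ := by
      refine eq_univ_of_forall fun ω => ⟨fun j hj => ?_, fun i hi => absurd hi i.not_lt_zero⟩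
      obtain rfl : j = 0 := by omega
      exact ⟨fun _ => ⟨Fin.last 0, hn⟩, fun _ => by rw [hn]; exact bot_le⟩
    rw [huniv, univ_inter, measure_univ, one_mul, hn]
  · rw [hn]
    exact hren _ _ (measurableSet_pastEvent hκ_stop hY_adapted hs hn hB) C hC

theorem condExp_indicator_shifted_ae_eq
    (h_iii : ∀ g : (ℕ → E × ℕ∞) → ℝ, Measurable g → (∃ Cg : ℝ, ∀ x, |g x| ≤ Cg) →
      ∀ n : ℕ, 1 ≤ n →
      μ[fun ω => g (fun k => (Y (n + k) ω, κ (n + k) ω - ((n + k : ℕ) : ℕ∞)))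
            * ({ω' | κ n ω' = ⊤}.indicator (fun _ => (1 : ℝ)) ω) | ℱ (n - 1)]
        =ᵐ[μ] fun _ => ∫ ω, g (fun k => (Y k ω, κ k ω - ((k : ℕ) : ℕ∞)))
            * ({ω' | κ 0 ω' = ⊤}.indicator (fun _ => (1 : ℝ)) ω) ∂μ)
    (hκ : ∀ n, Measurable (κ n)) (hY : ∀ n, Measurable (Y n))
    {C : Set (ℕ → E × ℕ∞)} (hC : MeasurableSet C) (n : ℕ) :
    μ[({ω | κ (n + 1) ω = ⊤} ∩ shifted κ Y (n + 1) ⁻¹' C).indicator 1 | ℱ n] =ᵐ[μ]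
      fun _ => μ.real ({ω | κ 0 ω = ⊤} ∩ shifted κ Y 0 ⁻¹' C) := by
  have hbdd : ∃ Cg : ℝ, ∀ x, |C.indicator 1 x| ≤ Cg :=
    ⟨1, fun x => by by_cases hx : x ∈ C <;> simp [hx]⟩
  have hindicator : ∀ m, (fun ω => C.indicator (1 : (ℕ → E × ℕ∞) → ℝ) (shifted κ Y m ω) *
      {ω' | κ m ω' = ⊤}.indicator (fun _ => (1 : ℝ)) ω) =
      ({ω | κ m ω = ⊤} ∩ shifted κ Y m ⁻¹' C).indicator 1 := by
    intro m
    ext ω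
    by_cases h₁ : κ m ω = ⊤ <;> by_cases h₂ : shifted κ Y m ω ∈ C <;> simp [h₁, h₂]
  have hmeas : MeasurableSet ({ω | κ 0 ω = ⊤} ∩ shifted κ Y 0 ⁻¹' C) :=
    (hκ 0 (measurableSet_singleton ⊤)).inter (measurable_shifted hκ hY 0 hC)
  convert h_iii (C.indicator 1) (measurable_const.indicator hC) hbdd (n + 1) (Nat.le_add_left 1 n)
    using 1
  · exact congrArg _ (hindicator (n + 1)).symm
  · ext
    rw [← integral_indicator_one hmeas, ← hindicator 0]
    simp only [shifted_zero]

theorem measure_inter_firstRenewals_preimage_mul [IsProbabilityMeasure μ]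
    (hren : HasRenewalProperty μ ℱ κ Y)
    (hκ_stop : ∀ i, IsStoppingTime ℱ (κ i)) (hY_adapted : ∀ n : ℕ, Measurable[ℱ n] (Y n))
    (h_ii : ∀ (m n : ℕ) (ω : Ω), m < n → (n : ℕ∞) ≤ κ m ω → κ n ω ≤ κ m ω)
    (hinf : ∀ᵐ ω ∂μ, {n | κ n ω = ⊤}.Infinite) {k : ℕ} {B : ℕ → Set (Σ m, Fin m → E)}
    (hB : ∀ i, MeasurableSet (B i)) {b : Set (Σ m, Fin m → E)} (hb : MeasurableSet b)
    (s : Fin (k + 1) → ℕ) :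
    μ ({ω | ∀ i < k, renewalBlock κ Y i ω ∈ B i} ∩ renewalBlock κ Y k ⁻¹' b ∩
        firstRenewals κ k ⁻¹' {s}) * μ {ω | κ 0 ω = ⊤} =
      μ ({ω | ∀ i < k, renewalBlock κ Y i ω ∈ B i} ∩ firstRenewals κ k ⁻¹' {s}) *
        μ ({ω | κ 0 ω = ⊤} ∩ renewalBlock κ Y 0 ⁻¹' b) := by
  by_cases hs : StrictMono s
  swap
  · have hnull : μ (firstRenewals κ k ⁻¹' {s}) = 0 := by
      rw [measure_eq_zero_iff_ae_notMem]
      filter_upwards [hinf] with ω hω hωs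
      exact hs ((hωs : firstRenewals κ k ω = s) ▸ fun i j hij => (Nat.nth_lt_nth hω).2 hij)
    simp [measure_mono_null inter_subset_right hnull]
  have hpiece (b' : Set (Σ m, Fin m → E)) :
      ({ω | ∀ i < k, renewalBlock κ Y i ω ∈ B i} ∩ renewalBlock κ Y k ⁻¹' b' ∩
        firstRenewals κ k ⁻¹' {s} : Set Ω) =ᵐ[μ] (pastEvent κ Y B s ∩
        ({ω | κ (s (Fin.last k)) ω = ⊤} ∩ shifted κ Y (s (Fin.last k)) ⁻¹' (firstBlock ⁻¹' b')) :
          Set Ω) :=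
    eventuallyEq_set.2 (hinf.mono fun ω hω => mem_inter_firstRenewals_preimage_iff h_ii hω hs B b')
  have hzero (b' : Set (Σ m, Fin m → E)) :
      {ω | κ 0 ω = ⊤} ∩ shifted κ Y 0 ⁻¹' (firstBlock ⁻¹' b') =
        {ω | κ 0 ω = ⊤} ∩ renewalBlock κ Y 0 ⁻¹' b' := by
    ext ω
    simp only [mem_inter_iff, mem_preimage, renewalBlock_zero_eq_firstBlock]
  have hW : {ω | ∀ i < k, renewalBlock κ Y i ω ∈ B i} ∩ firstRenewals κ k ⁻¹' {s} =
      {ω | ∀ i < k, renewalBlock κ Y i ω ∈ B i} ∩ renewalBlock κ Y k ⁻¹' univ ∩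
        firstRenewals κ k ⁻¹' {s} := by
    rw [preimage_univ, inter_univ]
  rw [hW, measure_congr (hpiece b), measure_congr (hpiece univ),
    measure_pastEvent_inter hren hκ_stop hY_adapted hs hB (measurable_firstBlock hb),
    measure_pastEvent_inter hren hκ_stop hY_adapted hs hB (measurable_firstBlock .univ), hzero,
    hzero, preimage_univ, inter_univ, mul_right_comm]

theorem measure_inter_renewalBlock_preimage [IsProbabilityMeasure μ]
    (hren : HasRenewalProperty μ ℱ κ Y)
    (hκ_stop : ∀ i, IsStoppingTime ℱ (κ i)) (hY_adapted : ∀ n : ℕ, Measurable[ℱ n] (Y n))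
    (h_ii : ∀ (m n : ℕ) (ω : Ω), m < n → (n : ℕ∞) ≤ κ m ω → κ n ω ≤ κ m ω)
    (hinf : ∀ᵐ ω ∂μ, {n | κ n ω = ⊤}.Infinite) (h_iv : 0 < μ {ω | κ 0 ω = ⊤})
    (k : ℕ) (B : ℕ → Set (Σ m, Fin m → E)) (hB : ∀ i, MeasurableSet (B i))
    (b : Set (Σ m, Fin m → E)) (hb : MeasurableSet b) :
    μ ({ω | ∀ i < k, renewalBlock κ Y i ω ∈ B i} ∩ renewalBlock κ Y k ⁻¹' b) =
      μ {ω | ∀ i < k, renewalBlock κ Y i ω ∈ B i} *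
        (μ[|{ω | κ 0 ω = ⊤}]).map (renewalBlock κ Y 0) b := by
  have hκ : ∀ n, Measurable (κ n) := fun n =>
    (hκ_stop n).measurable_iSup_enat.mono (iSup_le ℱ.le) le_rfl
  have hY : ∀ n, Measurable (Y n) := fun n => (hY_adapted n).mono (ℱ.le n) le_rfl
  have hH₀ : MeasurableSet {ω | κ 0 ω = ⊤} := hκ 0 (measurableSet_singleton ⊤)
  have hprod : μ ({ω | ∀ i < k, renewalBlock κ Y i ω ∈ B i} ∩ renewalBlock κ Y k ⁻¹' b) *
      μ {ω | κ 0 ω = ⊤} = μ {ω | ∀ i < k, renewalBlock κ Y i ω ∈ B i} *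
        μ ({ω | κ 0 ω = ⊤} ∩ renewalBlock κ Y 0 ⁻¹' b) := by
    rw [measure_eq_tsum_inter_preimage_singleton (measurable_firstRenewals hκ k),
      measure_eq_tsum_inter_preimage_singleton (measurable_firstRenewals hκ k)
        {ω | ∀ i < k, renewalBlock κ Y i ω ∈ B i},
      ← ENNReal.tsum_mul_right, ← ENNReal.tsum_mul_right]
    exact tsum_congr (measure_inter_firstRenewals_preimage_mul hren hκ_stop hY_adapted h_ii hinf
      hB hb)
  rw [Measure.map_apply (measurable_renewalBlock hκ hY 0) hb,
    cond_apply hH₀, mul_left_comm, ← hprod,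
    mul_comm (μ {ω | κ 0 ω = ⊤})⁻¹, mul_assoc, ENNReal.mul_inv_cancel h_iv.ne' (measure_ne_top _ _),
    mul_one]

end Measurability

end Renewal

open Renewal

theorem renewal_lemma_iid_blocks_general
    {Ω E : Type*} {mΩ : MeasurableSpace Ω} [MeasurableSpace E]
    (μ : Measure Ω) [IsProbabilityMeasure μ]
    (ℱ : Filtration ℕ mΩ)
    (κ : ℕ → Ω → ℕ∞) (Y : ℕ → Ω → E)
    (hκ_stop : ∀ i n : ℕ, MeasurableSet[ℱ n] {ω | κ i ω ≤ (n : ℕ∞)})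
    (hY_adapted : ∀ n : ℕ, Measurable[ℱ n] (Y n))
    (h_ii : ∀ (m n : ℕ) (ω : Ω), m < n → (n : ℕ∞) ≤ κ m ω → κ n ω ≤ κ m ω)
    (h_iii : ∀ g : (ℕ → E × ℕ∞) → ℝ, Measurable g → (∃ Cg : ℝ, ∀ x, |g x| ≤ Cg) →
      ∀ n : ℕ, 1 ≤ n →
      μ[fun ω => g (fun k => (Y (n + k) ω, κ (n + k) ω - ((n + k : ℕ) : ℕ∞)))
            * ({ω' | κ n ω' = ⊤}.indicator (fun _ => (1 : ℝ)) ω) | ℱ (n - 1)]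
        =ᵐ[μ] fun _ => ∫ ω, g (fun k => (Y k ω, κ k ω - ((k : ℕ) : ℕ∞)))
            * ({ω' | κ 0 ω' = ⊤}.indicator (fun _ => (1 : ℝ)) ω) ∂μ)
    (h_iv : 0 < μ {ω | κ 0 ω = ⊤}) :
    (∀ᵐ ω ∂μ, {n : ℕ | κ n ω = ⊤}.Infinite) ∧
    (iIndepFun
        (fun (k : ℕ) (ω : Ω) =>
          (⟨Nat.nth (fun n => κ n ω = ⊤) (k + 1) - Nat.nth (fun n => κ n ω = ⊤) k,
            fun j => Y (Nat.nth (fun n => κ n ω = ⊤) k + (j : ℕ)) ω⟩ :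
              Σ m : ℕ, Fin m → E)) μ) ∧
    (∀ k : ℕ,
      Measure.map
          (fun ω : Ω =>
            (⟨Nat.nth (fun n => κ n ω = ⊤) (k + 1) - Nat.nth (fun n => κ n ω = ⊤) k,
              fun j => Y (Nat.nth (fun n => κ n ω = ⊤) k + (j : ℕ)) ω⟩ :
                Σ m : ℕ, Fin m → E)) μ
        = Measure.map
            (fun ω : Ω =>
              (⟨Nat.nth (fun n => κ n ω = ⊤) 1, fun j => Y (j : ℕ) ω⟩ :
                Σ m : ℕ, Fin m → E))
            (μ[|{ω | κ 0 ω = ⊤}])) := by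
  have hτ : ∀ i, IsStoppingTime ℱ (κ i) := hκ_stop
  have hκ : ∀ n, Measurable (κ n) := fun n =>
    (hτ n).measurable_iSup_enat.mono (iSup_le ℱ.le) le_rfl
  have hY : ∀ n, Measurable (Y n) := fun n => (hY_adapted n).mono (ℱ.le n) le_rfl
  have hren : HasRenewalProperty μ ℱ κ Y := fun n A hA C hC =>
    measure_inter_eq_mul_of_condExp_indicator_ae_eq (ℱ.le n)
      ((hκ _ (measurableSet_singleton ⊤)).inter (measurable_shifted hκ hY _ hC))
      (condExp_indicator_shifted_ae_eq h_iii hκ hY hC n) hA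
  have hinf : ∀ᵐ ω ∂μ, {n | κ n ω = ⊤}.Infinite :=
    ae_infinite_of_condExp_indicator_eq (H := fun n => {ω | κ n ω = ⊤})
      (fun n => (hτ n).measurable_iSup_enat (measurableSet_singleton ⊤))
      (c := μ.real {ω | κ 0 ω = ⊤}) (ENNReal.toReal_pos h_iv.ne' (measure_ne_top _ _))
      fun n => by simpa using condExp_indicator_shifted_ae_eq h_iii hκ hY MeasurableSet.univ n
  have hmarkov := measure_inter_renewalBlock_preimage hren hτ hY_adapted h_ii hinf h_iv
  have hΨ := measurable_renewalBlock hκ hY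
  refine ⟨hinf, iIndepFun_of_measure_inter_eq hΨ hmarkov,
    fun k => (map_eq_of_measure_inter_eq hΨ hmarkov k).trans (Measure.map_congr ?_)⟩
  filter_upwards [ae_cond_mem (hκ 0 (measurableSet_singleton ⊤))] with ω hω
  exact block_zero_of_zero _ hω

/-- **Renewal lemma.** Almost surely the set `{n | κ n = ∞}` is infinite; moreover,
letting `N 0 < N 1 < ⋯` denote its increasing enumeration (via `Nat.nth`), the blocks
`Ψ k := (N (k+1) − N k, (Y (N k), …, Y (N (k+1) − 1)))`, viewed as random elements of
`Σ m, (Fin m → E)`, are independent and identically distributed, each with the law of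
`(N 1, (Y 0, …, Y (N 1 − 1)))` under the conditional probability `ℙ(· | κ 0 = ∞)`. -/
theorem renewal_lemma_iid_blocks
    {Ω E : Type*} {mΩ : MeasurableSpace Ω} [MeasurableSpace E]
    (μ : Measure Ω) [IsProbabilityMeasure μ]
    (ℱ : Filtration ℕ mΩ)
    (κ : ℕ → Ω → ℕ∞) (Y : ℕ → Ω → E)
    (hκ_stop : ∀ i n : ℕ, MeasurableSet[ℱ n] {ω | κ i ω ≤ (n : ℕ∞)})
    (hY_adapted : ∀ n : ℕ, Measurable[ℱ n] (Y n))
    (h_i : ∀ (n : ℕ) (ω : Ω), (n : ℕ∞) ≤ κ n ω)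
    (h_ii : ∀ (m n : ℕ) (ω : Ω), m < n → (n : ℕ∞) ≤ κ m ω → κ n ω ≤ κ m ω)
    (h_iii : ∀ g : (ℕ → E × ℕ∞) → ℝ, Measurable g → (∃ Cg : ℝ, ∀ x, |g x| ≤ Cg) →
      ∀ n : ℕ, 1 ≤ n →
      μ[fun ω => g (fun k => (Y (n + k) ω, κ (n + k) ω - ((n + k : ℕ) : ℕ∞)))
            * ({ω' | κ n ω' = ⊤}.indicator (fun _ => (1 : ℝ)) ω) | ℱ (n - 1)]
        =ᵐ[μ] fun _ => ∫ ω, g (fun k => (Y k ω, κ k ω - ((k : ℕ) : ℕ∞)))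
            * ({ω' | κ 0 ω' = ⊤}.indicator (fun _ => (1 : ℝ)) ω) ∂μ)
    (h_iv : 0 < μ {ω | κ 0 ω = ⊤}) :
    (∀ᵐ ω ∂μ, {n : ℕ | κ n ω = ⊤}.Infinite) ∧
    (iIndepFun
        (fun (k : ℕ) (ω : Ω) =>
          (⟨Nat.nth (fun n => κ n ω = ⊤) (k + 1) - Nat.nth (fun n => κ n ω = ⊤) k,
            fun j => Y (Nat.nth (fun n => κ n ω = ⊤) k + (j : ℕ)) ω⟩ :
              Σ m : ℕ, Fin m → E)) μ) ∧
    (∀ k : ℕ,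
      Measure.map
          (fun ω : Ω =>
            (⟨Nat.nth (fun n => κ n ω = ⊤) (k + 1) - Nat.nth (fun n => κ n ω = ⊤) k,
              fun j => Y (Nat.nth (fun n => κ n ω = ⊤) k + (j : ℕ)) ω⟩ :
                Σ m : ℕ, Fin m → E)) μ
        = Measure.map
            (fun ω : Ω =>
              (⟨Nat.nth (fun n => κ n ω = ⊤) 1, fun j => Y (j : ℕ) ω⟩ :
                Σ m : ℕ, Fin m → E))
            (μ[|{ω | κ 0 ω = ⊤}])) :=
  renewal_lemma_iid_blocks_general μ ℱ κ Y hκ_stop hY_adapted h_ii h_iii h_iv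
end

section
/- Almost surely there are infinitely many n ∈ ℕ for which κ_n = ∞; that is, ℙ(for every m ∈ ℕ there exists n ≥ m with κ_n = ∞) = 1. -/
open MeasureTheory ProbabilityTheory Set Filter

/-! The events `Aₙ = {κₙ = ∞}` are measurable with respect to `⨆ n, ℱ n`, and by (iii) with
`g ≡ 1` each of them has conditional probability `p = ℙ(κ₀ = ∞) > 0` given `ℱ (n - 1)`.
Hence the event `D` that no renewal occurs after time `m` has conditional probability at most
`1 - p` given `ℱ j` for every `j ≥ m`. By Lévy's upward theorem these conditional probabilities
converge almost surely to `1_D`, so `1_D ≤ 1 - p < 1` almost surely, i.e. `ℙ(D) = 0`. -/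

theorem measurableSet_eq_top_of_measurableSet_le {Ω : Type*} {m : MeasurableSpace Ω}
    {τ : Ω → ℕ∞} (h : ∀ n : ℕ, MeasurableSet[m] {ω | τ ω ≤ n}) :
    MeasurableSet[m] {ω | τ ω = ⊤} := by
  have : {ω | τ ω = ⊤} = (⋃ n : ℕ, {ω | τ ω ≤ n})ᶜ := by
    ext ω
    simp [ENat.eq_top_iff_forall_gt]
  rw [this]
  exact (MeasurableSet.iUnion h).compl

section ConditionalProbability

variable {Ω : Type*} {mΩ : MeasurableSpace Ω} {μ : Measure Ω} [IsFiniteMeasure μ]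

theorem condExp_indicator_le_one_sub_of_disjoint {m : MeasurableSpace Ω} (hm : m ≤ mΩ)
    {A D : Set Ω} (hA : MeasurableSet[mΩ] A) (hD : MeasurableSet[mΩ] D) (hAD : Disjoint A D) :
    μ[D.indicator (fun _ => (1 : ℝ)) | m]
      ≤ᵐ[μ] fun ω => 1 - μ[A.indicator (fun _ => (1 : ℝ)) | m] ω := by
  have hA_int := (integrable_const (1 : ℝ) (μ := μ)).indicator hA
  have hD_int := (integrable_const (1 : ℝ) (μ := μ)).indicator hD
  have hsum_le : A.indicator (fun _ => (1 : ℝ)) + D.indicator (fun _ => 1) ≤ᵐ[μ] fun _ => 1 := by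
    refine Eventually.of_forall fun ω => ?_
    rw [Pi.add_apply, ← congrFun (indicator_union_of_disjoint hAD _) ω]
    exact indicator_le_self' (fun _ _ => zero_le_one) ω
  have hmono := condExp_mono (m := m) (hA_int.add hD_int) (integrable_const 1) hsum_le
  rw [condExp_const hm] at hmono
  filter_upwards [hmono, condExp_add hA_int hD_int m] with ω hω hadd
  rw [hadd, Pi.add_apply] at hω
  linarith

theorem ae_notMem_of_eventually_condExp_indicator_le {ℱ : Filtration ℕ mΩ} {D : Set Ω}
    (hD : MeasurableSet[⨆ n, ℱ n] D) {c : ℝ} (hc : c < 1)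
    (hle : ∀ᶠ j in atTop, μ[D.indicator (fun _ => (1 : ℝ)) | ℱ j] ≤ᵐ[μ] fun _ => c) :
    ∀ᵐ ω ∂μ, ω ∉ D := by
  obtain ⟨m, hm⟩ := eventually_atTop.1 hle
  have hbound : ∀ᵐ ω ∂μ, ∀ j, μ[D.indicator (fun _ => (1 : ℝ)) | ℱ (j + m)] ω ≤ c :=
    ae_all_iff.2 fun j => hm _ (Nat.le_add_left m j)
  have hlevy := ((integrable_const (1 : ℝ) (μ := μ)).indicator (iSup_le ℱ.le _ hD)).tendsto_ae_condExp
    (stronglyMeasurable_const.indicator hD)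
  filter_upwards [hlevy, hbound] with ω hlim hω hωD
  have hle_c := le_of_tendsto' (hlim.comp (tendsto_add_atTop_nat m)) hω
  rw [indicator_of_mem hωD] at hle_c
  linarith

end ConditionalProbability

theorem renewal_infinitely_many_renewals_general
    {Ω E : Type*} {mΩ : MeasurableSpace Ω} [MeasurableSpace E]
    (μ : Measure Ω) [IsProbabilityMeasure μ]
    (ℱ : Filtration ℕ mΩ)
    (κ : ℕ → Ω → ℕ∞) (Y : ℕ → Ω → E)
    (hκ_stop : ∀ i n : ℕ, MeasurableSet[ℱ n] {ω | κ i ω ≤ (n : ℕ∞)})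
    (h_iii : ∀ g : (ℕ → E × ℕ∞) → ℝ, Measurable g → (∃ Cg : ℝ, ∀ x, |g x| ≤ Cg) →
      ∀ n : ℕ, 1 ≤ n →
      μ[fun ω => g (fun k => (Y (n + k) ω, κ (n + k) ω - ((n + k : ℕ) : ℕ∞)))
            * ({ω' | κ n ω' = ⊤}.indicator (fun _ => (1 : ℝ)) ω) | ℱ (n - 1)]
        =ᵐ[μ] fun _ => ∫ ω, g (fun k => (Y k ω, κ k ω - ((k : ℕ) : ℕ∞)))
            * ({ω' | κ 0 ω' = ⊤}.indicator (fun _ => (1 : ℝ)) ω) ∂μ)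
    (h_iv : 0 < μ {ω | κ 0 ω = ⊤}) :
    ∀ᵐ ω ∂μ, ∀ m : ℕ, ∃ n ≥ m, κ n ω = ⊤ := by
  have hsup : ⨆ n, ℱ n ≤ mΩ := iSup_le ℱ.le
  have hA : ∀ n, MeasurableSet[⨆ k, ℱ k] {ω | κ n ω = ⊤} := fun n =>
    measurableSet_eq_top_of_measurableSet_le fun k => le_iSup ℱ k _ (hκ_stop n k)
  have hcond : ∀ n, μ[{ω | κ (n + 1) ω = ⊤}.indicator (fun _ => (1 : ℝ)) | ℱ n]
      =ᵐ[μ] fun _ => μ.real {ω | κ 0 ω = ⊤} := fun n => by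
    simpa [integral_indicator_const _ (hsup _ (hA 0))] using
      h_iii (fun _ => 1) measurable_const ⟨1, by simp⟩ (n + 1) le_add_self
  have hp : 0 < μ.real {ω | κ 0 ω = ⊤} := ENNReal.toReal_pos h_iv.ne' (measure_ne_top μ _)
  refine ae_all_iff.2 fun m => ?_
  set D := {ω | ∀ n ≥ m, κ n ω ≠ ⊤}
  have hD : MeasurableSet[⨆ k, ℱ k] D := by
    simp only [D, ofPred_forall]
    exact .iInter fun n => .iInter fun _ => (hA n).compl
  have hnoD := ae_notMem_of_eventually_condExp_indicator_le (μ := μ) hD (sub_lt_self 1 hp)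
    (eventually_atTop.2 ⟨m, fun j hj => ?_⟩)
  · filter_upwards [hnoD] with ω hω
    simpa [D] using hω
  · have hdisj : Disjoint {ω | κ (j + 1) ω = ⊤} D :=
      disjoint_left.2 fun ω hω hωD => hωD (j + 1) (by omega) hω
    filter_upwards [condExp_indicator_le_one_sub_of_disjoint (ℱ.le j) (hsup _ (hA (j + 1)))
      (hsup _ hD) hdisj, hcond j] with ω hle heq
    rwa [heq] at hle

/-- **Renewal framework, Claim on infinitely many renewals.**
Almost surely there are infinitely many `n ∈ ℕ` for which `κ n = ∞`. -/
theorem renewal_infinitely_many_renewals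
    {Ω E : Type*} {mΩ : MeasurableSpace Ω} [MeasurableSpace E]
    (μ : Measure Ω) [IsProbabilityMeasure μ]
    (ℱ : Filtration ℕ mΩ)
    (κ : ℕ → Ω → ℕ∞) (Y : ℕ → Ω → E)
    (hκ_stop : ∀ i n : ℕ, MeasurableSet[ℱ n] {ω | κ i ω ≤ (n : ℕ∞)})
    (hY_adapted : ∀ n : ℕ, Measurable[ℱ n] (Y n))
    (h_i : ∀ (n : ℕ) (ω : Ω), (n : ℕ∞) ≤ κ n ω)
    (h_ii : ∀ (m n : ℕ) (ω : Ω), m < n → (n : ℕ∞) ≤ κ m ω → κ n ω ≤ κ m ω)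
    (h_iii : ∀ g : (ℕ → E × ℕ∞) → ℝ, Measurable g → (∃ Cg : ℝ, ∀ x, |g x| ≤ Cg) →
      ∀ n : ℕ, 1 ≤ n →
      μ[fun ω => g (fun k => (Y (n + k) ω, κ (n + k) ω - ((n + k : ℕ) : ℕ∞)))
            * ({ω' | κ n ω' = ⊤}.indicator (fun _ => (1 : ℝ)) ω) | ℱ (n - 1)]
        =ᵐ[μ] fun _ => ∫ ω, g (fun k => (Y k ω, κ k ω - ((k : ℕ) : ℕ∞)))
            * ({ω' | κ 0 ω' = ⊤}.indicator (fun _ => (1 : ℝ)) ω) ∂μ)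
    (h_iv : 0 < μ {ω | κ 0 ω = ⊤}) :
    ∀ᵐ ω ∂μ, ∀ m : ℕ, ∃ n ≥ m, κ n ω = ⊤ :=
  renewal_infinitely_many_renewals_general μ ℱ κ Y hκ_stop h_iii h_iv
end

section
/- For every k ∈ ℕ and all natural numbers n_0 < n_1 < ⋯ < n_k with n_k ≥ 1, writing Λ := {n_0, n_1, …, n_k}, the event {κ_i = ∞ for all i ∈ Λ} ∩ {κ_i < ∞ for all i ∈ {0, 1, …, n_k} \ Λ} (which equals the event {N_0 = n_0, N_1 = n_1, …, N_k = n_k}) belongs to the σ-algebra 𝓕⁺_{n_k − 1}. -/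
open MeasureTheory ProbabilityTheory Set Filter

/-- For naturals `n_0 < n_1 < ⋯ < n_k` with `n_k ≥ 1`, writing `Λ = {n_0, …, n_k}`,
the event `{κ i = ∞ ∀ i ∈ Λ} ∩ {κ i < ∞ ∀ i ∈ {0,…,n_k} \ Λ}` (i.e. the event
`{N_0 = n_0, …, N_k = n_k}`) belongs to the σ-algebra `𝓕⁺_{n_k − 1}`, the σ-algebra
generated by `𝓕 (n_k − 1)` together with the event `{κ ((n_k − 1) + 1) = ∞}`. -/
theorem renewal_block_event_measurable
    {Ω E : Type*} {mΩ : MeasurableSpace Ω} [MeasurableSpace E]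
    (μ : Measure Ω) [IsProbabilityMeasure μ]
    (ℱ : Filtration ℕ mΩ)
    (κ : ℕ → Ω → ℕ∞) (Y : ℕ → Ω → E)
    (hκ_stop : ∀ i n : ℕ, MeasurableSet[ℱ n] {ω | κ i ω ≤ (n : ℕ∞)})
    (hY_adapted : ∀ n : ℕ, Measurable[ℱ n] (Y n))
    (h_i : ∀ (n : ℕ) (ω : Ω), (n : ℕ∞) ≤ κ n ω)
    (h_ii : ∀ (m n : ℕ) (ω : Ω), m < n → (n : ℕ∞) ≤ κ m ω → κ n ω ≤ κ m ω)
    (h_iii : ∀ g : (ℕ → E × ℕ∞) → ℝ, Measurable g → (∃ Cg : ℝ, ∀ x, |g x| ≤ Cg) →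
      ∀ n : ℕ, 1 ≤ n →
      μ[fun ω => g (fun k => (Y (n + k) ω, κ (n + k) ω - ((n + k : ℕ) : ℕ∞)))
            * ({ω' | κ n ω' = ⊤}.indicator (fun _ => (1 : ℝ)) ω) | ℱ (n - 1)]
        =ᵐ[μ] fun _ => ∫ ω, g (fun k => (Y k ω, κ k ω - ((k : ℕ) : ℕ∞)))
            * ({ω' | κ 0 ω' = ⊤}.indicator (fun _ => (1 : ℝ)) ω) ∂μ)
    (h_iv : 0 < μ {ω | κ 0 ω = ⊤})
    (k : ℕ) (ns : Fin (k + 1) → ℕ) (hns : StrictMono ns)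
    (hns_last : 1 ≤ ns (Fin.last k)) :
    MeasurableSet[(ℱ (ns (Fin.last k) - 1) : MeasurableSpace Ω) ⊔
        MeasurableSpace.generateFrom {{ω | κ (ns (Fin.last k) - 1 + 1) ω = ⊤}}]
      {ω | (∀ i : Fin (k + 1), κ (ns i) ω = ⊤) ∧
           (∀ j : ℕ, j ≤ ns (Fin.last k) → (∀ i : Fin (k + 1), ns i ≠ j) → κ j ω ≠ ⊤)} := by
  set m := ns (Fin.last k) with hm_def
  have hm1 : m - 1 + 1 = m := Nat.succ_pred_eq_of_pos hns_last
  have key : {ω | (∀ i : Fin (k + 1), κ (ns i) ω = ⊤) ∧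
           (∀ j : ℕ, j ≤ m → (∀ i : Fin (k + 1), ns i ≠ j) → κ j ω ≠ ⊤)}
      = (({ω | ∀ i : Fin (k + 1), ¬ (κ (ns i) ω ≤ ((m - 1 : ℕ) : ℕ∞))} ∩
          ⋂ j ∈ Finset.range (m + 1),
            (if ∀ i : Fin (k + 1), ns i ≠ j then {ω | κ j ω ≤ ((m - 1 : ℕ) : ℕ∞)}
             else univ)) ∩ {ω | κ (m - 1 + 1) ω = ⊤}) := by
    rw [hm1]
    ext ω
    simp only [mem_inter_iff, mem_setOf_eq, mem_iInter, Finset.mem_range, Nat.lt_succ_iff]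
    constructor
    · rintro ⟨h1, h2⟩
      refine ⟨⟨fun i hle => ?_, fun j hj => ?_⟩, h1 (Fin.last k)⟩
      · rw [h1 i] at hle
        simp at hle
      · split_ifs with hΛ
        · -- j ≤ m, j not in Λ, so κ j ω ≠ ⊤ and we claim κ j ω ≤ m - 1
          have hne : κ j ω ≠ ⊤ := h2 j hj hΛ
          have hjm : j < m := lt_of_le_of_ne hj (fun h => hΛ (Fin.last k) h.symm)
          by_contra hgt
          have hlt : ((m - 1 : ℕ) : ℕ∞) < κ j ω := lt_of_not_ge hgt
          have hge : (m : ℕ∞) ≤ κ j ω := by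
            have h' : ((m - 1 : ℕ) : ℕ∞) + 1 ≤ κ j ω := Order.add_one_le_of_lt hlt
            rwa [← Nat.cast_add_one, hm1] at h'
          have := h_ii j m ω hjm hge
          rw [h1 (Fin.last k)] at this
          exact hne (top_le_iff.mp this)
        · exact mem_univ ω
    · rintro ⟨⟨h1, h2⟩, h3⟩
      constructor
      · intro i
        have hge : (m : ℕ∞) ≤ κ (ns i) ω := by
          have hlt : ((m - 1 : ℕ) : ℕ∞) < κ (ns i) ω := lt_of_not_ge (h1 i)
          have h' : ((m - 1 : ℕ) : ℕ∞) + 1 ≤ κ (ns i) ω := Order.add_one_le_of_lt hlt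
          rwa [← Nat.cast_add_one, hm1] at h'
        rcases lt_or_eq_of_le (hns.monotone i.le_last) with hlt | heq
        · have := h_ii (ns i) m ω hlt hge
          rw [h3] at this
          exact top_le_iff.mp this
        · rw [heq]; exact h3
      · intro j hj hΛ
        have h' := h2 j hj
        rw [if_pos hΛ] at h'
        simp only [mem_setOf_eq] at h'
        exact fun htop => by rw [htop] at h'; simp at h'
  rw [key]
  refine MeasurableSet.inter
    ((le_sup_left : (ℱ (m - 1) : MeasurableSpace Ω) ≤ _) _ ?_)
    ((le_sup_right : MeasurableSpace.generateFrom {{ω | κ (m - 1 + 1) ω = ⊤}} ≤ _) _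
      (MeasurableSpace.measurableSet_generateFrom rfl))
  refine MeasurableSet.inter ?_ ?_
  · have : {ω | ∀ i : Fin (k + 1), ¬ (κ (ns i) ω ≤ ((m - 1 : ℕ) : ℕ∞))}
        = ⋂ i : Fin (k + 1), {ω | κ (ns i) ω ≤ ((m - 1 : ℕ) : ℕ∞)}ᶜ := by
      ext ω; simp [mem_iInter]
    rw [this]
    exact MeasurableSet.iInter fun i => (hκ_stop (ns i) (m - 1)).compl
  · refine MeasurableSet.biInter (Finset.range (m + 1)).countable_toSet fun j _ => ?_
    split_ifs
    · exact hκ_stop j (m - 1)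
    · exact MeasurableSet.univ
end

section
/- For every bounded measurable function g : (E × (ℕ ∪ {∞}))^ℕ → ℝ and every n ≥ 1, almost surely on the event {κ_n = ∞} one has 𝔼[g(Y_n, κ̂_n, Y_{n+1}, κ̂_{n+1}, …) | 𝓕⁺_{n−1}] = 𝔼[g(Y_0, κ̂_0, Y_1, κ̂_1, …) | κ_0 = ∞]. -/
/-!
Let `A = {κ n = ∞}` and `𝒢 = ℱ (n - 1)`. Every set of `𝒢 ⊔ σ(A)` meets `A` in `B ∩ A` for some
`B ∈ 𝒢`. By the regeneration hypothesis the `𝒢`-conditional expectations of `F · 1_A` (with `F`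
the shifted functional of the path) and of `1_A` are the constants `I = 𝔼[g(…) · 1{κ 0 = ∞}]` and
`p = ℙ(κ 0 = ∞)`, so `∫_{B ∩ A} F = ℙ(B) I` and `ℙ(B ∩ A) = ℙ(B) p`. Hence `(I / p) · 1_A` has the
integrals defining `𝔼[F · 1_A | 𝒢 ⊔ σ(A)] = 1_A · 𝔼[F | 𝒢 ⊔ σ(A)]`, and `I / p` is the expectation
of `g(…)` under `ℙ(· | κ 0 = ∞)`.
-/

open MeasureTheory ProbabilityTheory Set Filter MeasurableSpace

theorem Set.mul_indicator_one_eq_indicator {ι M₀ : Type*} [MulZeroOneClass M₀] (s : Set ι)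
    (f : ι → M₀) : (fun i => f i * s.indicator (fun _ => 1) i) = s.indicator f := by
  ext i
  simp only [← indicator_mul_right, mul_one]

theorem MeasureTheory.IsStoppingTime.measurable_enat {Ω : Type*} {mΩ : MeasurableSpace Ω}
    {ℱ : Filtration ℕ mΩ} {τ : Ω → ℕ∞} (hτ : IsStoppingTime ℱ τ) : Measurable τ :=
  measurable_to_countable' fun x => hτ.measurable' (measurableSet_singleton (α := WithTop ℕ) x)

theorem ProbabilityTheory.integral_cond_eq_div {Ω : Type*} {mΩ : MeasurableSpace Ω}
    {μ : Measure Ω} {s : Set Ω} (hs : MeasurableSet s) (f : Ω → ℝ) :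
    ∫ ω, f ω ∂μ[|s] = (∫ ω, s.indicator f ω ∂μ) / μ.real s := by
  rw [cond, integral_smul_measure, integral_indicator hs, ENNReal.toReal_inv, smul_eq_mul,
    measureReal_def, inv_mul_eq_div]

theorem MeasurableSpace.exists_inter_eq_of_measurableSet_sup_generateFrom_singleton
    {Ω : Type*} {m : MeasurableSpace Ω} {A S : Set Ω}
    (hS : MeasurableSet[m ⊔ generateFrom {A}] S) :
    ∃ B, MeasurableSet[m] B ∧ A ∩ B = A ∩ S := by
  have hle : m ⊔ generateFrom {A} ≤ (m.comap ((↑) : A → Ω)).map (↑) := by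
    refine sup_le le_map_comap (generateFrom_le ?_)
    rintro _ rfl
    exact ⟨univ, MeasurableSet.univ, by simp⟩
  obtain ⟨B, hB, hBS⟩ := hle S hS
  exact ⟨B, hB, Subtype.preimage_coe_eq_preimage_coe_iff.mp hBS⟩

theorem MeasureTheory.setIntegral_eq_measureReal_smul_of_condExp_ae_eq_const
    {Ω E : Type*} [NormedAddCommGroup E] [NormedSpace ℝ E] [CompleteSpace E]
    {m mΩ : MeasurableSpace Ω} (hm : m ≤ mΩ) {μ : Measure Ω} [SigmaFinite (μ.trim hm)]
    {f : Ω → E} (hf : Integrable f μ) {c : E} (hfc : μ[f | m] =ᵐ[μ] fun _ => c)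
    {B : Set Ω} (hB : MeasurableSet[m] B) :
    ∫ ω in B, f ω ∂μ = μ.real B • c := by
  rw [← setIntegral_condExp hm hf hB, setIntegral_congr_ae (hm B hB) (hfc.mono fun _ h _ => h),
    setIntegral_const]

theorem MeasureTheory.ae_condExp_sup_generateFrom_singleton_eq_div
    {Ω : Type*} {m mΩ : MeasurableSpace Ω} (hm : m ≤ mΩ) {μ : Measure Ω} [IsFiniteMeasure μ]
    {A : Set Ω} (hA : MeasurableSet A) {f : Ω → ℝ} (hf : Integrable f μ) {I p : ℝ} (hp : p ≠ 0)
    (hfA : μ[A.indicator f | m] =ᵐ[μ] fun _ => I) (hA1 : μ[A.indicator 1 | m] =ᵐ[μ] fun _ => p) :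
    ∀ᵐ ω ∂μ, ω ∈ A → μ[f | m ⊔ generateFrom {A}] ω = I / p := by
  have hA_sup : MeasurableSet[m ⊔ generateFrom {A}] A :=
    le_sup_right (a := m) A (measurableSet_generateFrom rfl)
  have hle : m ⊔ generateFrom {A} ≤ mΩ := sup_le hm (generateFrom_le fun _ h => h ▸ hA)
  have hconst : A.indicator (fun _ => I / p) =ᵐ[μ] μ[A.indicator f | m ⊔ generateFrom {A}] := by
    refine ae_eq_condExp_of_forall_setIntegral_eq hle (hf.indicator hA)
      (fun _ _ _ => ((integrable_const _).indicator hA).integrableOn) (fun S hS _ => ?_)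
      (stronglyMeasurable_const.indicator hA_sup).aestronglyMeasurable
    obtain ⟨B, hB, hBS⟩ := exists_inter_eq_of_measurableSet_sup_generateFrom_singleton hS
    have hf_B := setIntegral_eq_measureReal_smul_of_condExp_ae_eq_const hm (hf.indicator hA) hfA hB
    have h1_B := setIntegral_eq_measureReal_smul_of_condExp_ae_eq_const hm
      ((integrable_const 1).indicator hA) hA1 hB
    have hSB (g : Ω → ℝ) : ∫ ω in S, A.indicator g ω ∂μ = ∫ ω in B, A.indicator g ω ∂μ := by
      rw [setIntegral_indicator hA, setIntegral_indicator hA, inter_comm S, inter_comm B, hBS]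
    have hconst_eq : A.indicator (fun _ => I / p) = fun ω => A.indicator 1 ω * (I / p) := by
      ext ω; by_cases hω : ω ∈ A <;> simp [hω]
    calc ∫ ω in S, A.indicator (fun _ => I / p) ω ∂μ
        = μ.real B * p * (I / p) := by
          rw [hSB, hconst_eq, integral_mul_const, h1_B, smul_eq_mul]
      _ = μ.real B * I := by field_simp
      _ = ∫ ω in S, A.indicator f ω ∂μ := by rw [hSB, hf_B, smul_eq_mul]
  filter_upwards [hconst.trans (condExp_indicator hf hA_sup)] with ω hω hωA
  simpa [indicator_of_mem hωA] using hω.symm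

theorem renewal_condexp_after_renewal_general
    {Ω E : Type*} {mΩ : MeasurableSpace Ω} [MeasurableSpace E]
    (μ : Measure Ω) [IsProbabilityMeasure μ]
    (ℱ : Filtration ℕ mΩ)
    (κ : ℕ → Ω → ℕ∞) (Y : ℕ → Ω → E)
    (hκ_stop : ∀ i n : ℕ, MeasurableSet[ℱ n] {ω | κ i ω ≤ (n : ℕ∞)})
    (hY_adapted : ∀ n : ℕ, Measurable[ℱ n] (Y n))
    (h_iii : ∀ g : (ℕ → E × ℕ∞) → ℝ, Measurable g → (∃ Cg : ℝ, ∀ x, |g x| ≤ Cg) →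
      ∀ n : ℕ, 1 ≤ n →
      μ[fun ω => g (fun k => (Y (n + k) ω, κ (n + k) ω - ((n + k : ℕ) : ℕ∞)))
            * ({ω' | κ n ω' = ⊤}.indicator (fun _ => (1 : ℝ)) ω) | ℱ (n - 1)]
        =ᵐ[μ] fun _ => ∫ ω, g (fun k => (Y k ω, κ k ω - ((k : ℕ) : ℕ∞)))
            * ({ω' | κ 0 ω' = ⊤}.indicator (fun _ => (1 : ℝ)) ω) ∂μ)
    (h_iv : 0 < μ {ω | κ 0 ω = ⊤})
    (g : (ℕ → E × ℕ∞) → ℝ) (hg : Measurable g) (hgb : ∃ Cg : ℝ, ∀ x, |g x| ≤ Cg)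
    (n : ℕ) (hn : 1 ≤ n) :
    ∀ᵐ ω ∂μ, κ n ω = ⊤ →
      (μ[fun ω' => g (fun k => (Y (n + k) ω', κ (n + k) ω' - ((n + k : ℕ) : ℕ∞))) |
          (ℱ (n - 1) : MeasurableSpace Ω) ⊔
            MeasurableSpace.generateFrom {{ω' | κ (n - 1 + 1) ω' = ⊤}}]) ω
        = ∫ ω', g (fun k => (Y k ω', κ k ω' - ((k : ℕ) : ℕ∞)))
            ∂(μ[|{ω' | κ 0 ω' = ⊤}]) := by
  obtain ⟨C, hC⟩ := hgb
  rw [Nat.sub_add_cancel hn]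
  have hκ (i : ℕ) : Measurable (κ i) := IsStoppingTime.measurable_enat (ℱ := ℱ) (hκ_stop i)
  have hrenewal (i : ℕ) : MeasurableSet {ω | κ i ω = ⊤} := hκ i (measurableSet_singleton ⊤)
  have hF : Measurable fun ω => g fun k => (Y (n + k) ω, κ (n + k) ω - ((n + k : ℕ) : ℕ∞)) :=
    hg.comp <| measurable_pi_lambda _ fun k =>
      ((hY_adapted (n + k)).mono (ℱ.le _) le_rfl).prodMk
        ((measurable_of_countable (· - ((n + k : ℕ) : ℕ∞))).comp (hκ _))
  have hF_int : Integrable _ μ :=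
    Integrable.of_bound hF.aestronglyMeasurable C (ae_of_all _ fun _ => hC _)
  have hI := h_iii g hg ⟨C, hC⟩ n hn
  have hp := h_iii (fun _ => 1) measurable_const ⟨1, fun _ => by norm_num⟩ n hn
  simp only [mul_indicator_one_eq_indicator] at hI hp
  replace hp : μ[{ω | κ n ω = ⊤}.indicator 1 | ℱ (n - 1)]
      =ᵐ[μ] fun _ => μ.real {ω | κ 0 ω = ⊤} := by
    rwa [← integral_indicator_one (hrenewal 0)]
  filter_upwards [ae_condExp_sup_generateFrom_singleton_eq_div (ℱ.le (n - 1)) (hrenewal n) hF_int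
    ((measureReal_ne_zero_iff).mpr h_iv.ne') hI hp] with ω hω hωA
  rw [hω hωA, integral_cond_eq_div (hrenewal 0)]

/-- For every bounded measurable `g : (E × (ℕ ∪ {∞}))^ℕ → ℝ` and every `n ≥ 1`,
almost surely on the event `{κ n = ∞}` one has
`𝔼[g(Y_n, κ̂_n, Y_{n+1}, κ̂_{n+1}, …) | 𝓕⁺_{n−1}] = 𝔼[g(Y_0, κ̂_0, Y_1, κ̂_1, …) | κ_0 = ∞]`,
where `𝓕⁺_{n−1}` is generated by `𝓕 (n−1)` together with the event `{κ ((n−1)+1) = ∞}`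
and the right-hand side is the expectation under the conditional measure `ℙ(· | κ_0 = ∞)`. -/
theorem renewal_condexp_after_renewal
    {Ω E : Type*} {mΩ : MeasurableSpace Ω} [MeasurableSpace E]
    (μ : Measure Ω) [IsProbabilityMeasure μ]
    (ℱ : Filtration ℕ mΩ)
    (κ : ℕ → Ω → ℕ∞) (Y : ℕ → Ω → E)
    (hκ_stop : ∀ i n : ℕ, MeasurableSet[ℱ n] {ω | κ i ω ≤ (n : ℕ∞)})
    (hY_adapted : ∀ n : ℕ, Measurable[ℱ n] (Y n))
    (h_i : ∀ (n : ℕ) (ω : Ω), (n : ℕ∞) ≤ κ n ω)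
    (h_ii : ∀ (m n : ℕ) (ω : Ω), m < n → (n : ℕ∞) ≤ κ m ω → κ n ω ≤ κ m ω)
    (h_iii : ∀ g : (ℕ → E × ℕ∞) → ℝ, Measurable g → (∃ Cg : ℝ, ∀ x, |g x| ≤ Cg) →
      ∀ n : ℕ, 1 ≤ n →
      μ[fun ω => g (fun k => (Y (n + k) ω, κ (n + k) ω - ((n + k : ℕ) : ℕ∞)))
            * ({ω' | κ n ω' = ⊤}.indicator (fun _ => (1 : ℝ)) ω) | ℱ (n - 1)]
        =ᵐ[μ] fun _ => ∫ ω, g (fun k => (Y k ω, κ k ω - ((k : ℕ) : ℕ∞)))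
            * ({ω' | κ 0 ω' = ⊤}.indicator (fun _ => (1 : ℝ)) ω) ∂μ)
    (h_iv : 0 < μ {ω | κ 0 ω = ⊤})
    (g : (ℕ → E × ℕ∞) → ℝ) (hg : Measurable g) (hgb : ∃ Cg : ℝ, ∀ x, |g x| ≤ Cg)
    (n : ℕ) (hn : 1 ≤ n) :
    ∀ᵐ ω ∂μ, κ n ω = ⊤ →
      (μ[fun ω' => g (fun k => (Y (n + k) ω', κ (n + k) ω' - ((n + k : ℕ) : ℕ∞))) |
          (ℱ (n - 1) : MeasurableSpace Ω) ⊔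
            MeasurableSpace.generateFrom {{ω' | κ (n - 1 + 1) ω' = ⊤}}]) ω
        = ∫ ω', g (fun k => (Y k ω', κ k ω' - ((k : ℕ) : ℕ∞)))
            ∂(μ[|{ω' | κ 0 ω' = ⊤}]) :=
  renewal_condexp_after_renewal_general μ ℱ κ Y hκ_stop hY_adapted h_iii h_iv g hg hgb n hn
end

section
/- For all m, n ∈ ℕ with m < n, if κ_m ≥ n then κ_m ≥ κ_n. -/
open Set

theorem sInf_le_sInf_of_le_sInf {α : Type*} [CompleteLattice α] {s t : Set α} {a : α}
    (ha : a ≤ sInf s) (h : ∀ x ∈ s, a ≤ x → x ∈ t) : sInf t ≤ sInf s :=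
  sInf_le_sInf fun x hx => h x hx (ha.trans (sInf_le hx))

theorem Finset.sum_Ico_le_sum_Ico_of_le {M : Type*} [AddCommMonoid M] [PartialOrder M]
    [IsOrderedAddMonoid M] {f : ℕ → M} (hf : ∀ i, 0 ≤ f i) {m n k : ℕ} (hmn : m ≤ n) :
    ∑ i ∈ Finset.Ico n k, f i ≤ ∑ i ∈ Finset.Ico m k, f i :=
  Finset.sum_le_sum_of_subset_of_nonneg (Finset.Ico_subset_Ico hmn le_rfl) fun i _ _ => hf i

theorem kappa_monotone_interlacing_general
    (T : ℕ → ℝ) (hT : ∀ n, 0 ≤ T n)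
    (D : ℕ → EReal)
    (κ : ℕ → ℕ∞)
    (hκ : ∀ n : ℕ, κ n = sInf {x : ℕ∞ | ∃ n' : ℕ, x = (n' : ℕ∞) ∧ n ≤ n' ∧
      ((∑ i ∈ Finset.Ico n n', T i : ℝ) : EReal) ≤ D n'}) :
    ∀ m n : ℕ, m < n → (n : ℕ∞) ≤ κ m → κ n ≤ κ m := by
  intro m n hmn hnκ
  rw [hκ m] at hnκ ⊢
  rw [hκ n]
  refine sInf_le_sInf_of_le_sInf hnκ ?_
  rintro _ ⟨n', rfl, -, hstop⟩ hnn'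
  have hsum : ∑ i ∈ Finset.Ico n n', T i ≤ ∑ i ∈ Finset.Ico m n', T i :=
    Finset.sum_Ico_le_sum_Ico_of_le hT hmn.le
  exact ⟨n', rfl, by exact_mod_cast hnn', le_trans (by exact_mod_cast hsum) hstop⟩

/-- Given nonnegative reals `(T n)` and `(D n)` taking values in `[−∞, ∞)` (encoded in
`EReal` with `D n ≠ ⊤`), define `κ n := inf {n' ≥ n : D n' ≥ T n + ⋯ + T (n'−1)} ∈ ℕ∞`.
Then for all `m < n`, if `κ m ≥ n` then `κ m ≥ κ n`. -/
theorem kappa_monotone_interlacing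
    (T : ℕ → ℝ) (hT : ∀ n, 0 ≤ T n)
    (D : ℕ → EReal) (hD : ∀ n, D n ≠ ⊤)
    (κ : ℕ → ℕ∞)
    (hκ : ∀ n : ℕ, κ n = sInf {x : ℕ∞ | ∃ n' : ℕ, x = (n' : ℕ∞) ∧ n ≤ n' ∧
      ((∑ i ∈ Finset.Ico n n', T i : ℝ) : EReal) ≤ D n'}) :
    ∀ m n : ℕ, m < n → (n : ℕ∞) ≤ κ m → κ n ≤ κ m :=
  kappa_monotone_interlacing_general T hT D κ hκ
end

section
/- There exist constants c', C', p' > 0, depending only on c, C, p, such that for every t ≥ 0 and every L ≥ 0, ℙ(max(t − τ_{N(t)}, M_{N(t)+1}) > L) ≤ C' e^{−c' L^{p'}}; here M_{N(t)+1} is the mark attached to the renewal interval [τ_{N(t)}, τ_{N(t)+1}) containing t. -/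
/-!
If the overshoot event occurs, the renewal interval `[τ n, τ (n + 1))` covering `t`, `n = N t`,
has length `U (n + 1) ∈ [2 ^ j, 2 ^ (j + 1))` for some `j`, so `τ n ∈ [t - 2 ^ (j + 1), t]` while
`max (U (n + 1)) (M (n + 1)) > max (2 ^ j - 1) L`. Union-bound over `j` and over the value `k` of
`n`: `τ k` is independent of `(U (k + 1), M (k + 1))`, and since renewals are at least `1` apart,
at most `2 ^ (j + 1) + 1` of the `τ k` lie in an interval of length `2 ^ (j + 1)`. The tail bound
at level `x = max (2 ^ j - 1) L` pays for this count with half of its exponent, because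
`4 ^ j e^{-(c/2) x^p}` is bounded, leaving `e^{-(c/2) L^p}` times a geometric series in `j`.
-/

open MeasureTheory ProbabilityTheory Set Filter

open Real in
theorem exists_sq_add_one_le_mul_exp_mul_rpow {a p : ℝ} (ha : 0 < a) (hp : 0 < p) :
    ∃ K, 0 < K ∧ ∀ x, 0 ≤ x → (x + 1) ^ 2 ≤ K * exp (a * x ^ p) := by
  set n := ⌈2 / p⌉₊
  refine ⟨4 * (1 + n.factorial / a ^ n), by positivity, fun x hx => ?_⟩
  have hexp : 1 ≤ exp (a * x ^ p) := one_le_exp (by positivity)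
  rcases le_total x 1 with hx1 | hx1
  · nlinarith [show 0 ≤ (n.factorial : ℝ) / a ^ n * exp (a * x ^ p) by positivity]
  · have hnp : 2 ≤ (n : ℝ) * p := by
      rw [← div_le_iff₀ hp]
      exact Nat.le_ceil _
    have hpow : x ^ 2 ≤ (x ^ p) ^ n := by
      rw [← rpow_natCast (x ^ p) n, ← rpow_mul hx, mul_comm, ← rpow_natCast x 2]
      exact rpow_le_rpow_of_exponent_le hx1 (mod_cast hnp)
    have hfact := pow_div_factorial_le_exp (a * x ^ p) (by positivity) n
    rw [mul_pow, div_le_iff₀ (by positivity)] at hfact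
    have : x ^ 2 ≤ n.factorial / a ^ n * exp (a * x ^ p) := by
      rw [div_mul_eq_mul_div, le_div_iff₀ (by positivity)]
      nlinarith [pow_pos ha n]
    nlinarith

open Real in
theorem exists_tsum_dyadic_tail_le {c C p : ℝ} (hc : 0 < c) (hC : 0 < C) (hp : 0 < p) :
    ∃ C', 0 < C' ∧ ∀ L, 0 ≤ L →
      ∑' j : ℕ, ENNReal.ofReal (2 ^ (j + 1) + 1) *
          ENNReal.ofReal (C * exp (-c * max (2 ^ j - 1) L ^ p))
        ≤ ENNReal.ofReal (C' * exp (-(c / 2) * L ^ p)) := by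
  obtain ⟨K, hK, hpoly⟩ := exists_sq_add_one_le_mul_exp_mul_rpow (half_pos hc) hp
  refine ⟨6 * C * K, by positivity, fun L hL => ?_⟩
  set B := 3 * C * K * exp (-(c / 2) * L ^ p)
  have hterm (j : ℕ) :
      (2 ^ (j + 1) + 1) * (C * exp (-c * max (2 ^ j - 1) L ^ p)) ≤ B * (1 / 2) ^ j := by
    set x := max ((2 : ℝ) ^ j - 1) L
    have hx : 0 ≤ x := hL.trans (le_max_right _ _)
    have hjx : (2 : ℝ) ^ j ≤ x + 1 := by linarith [le_max_left ((2 : ℝ) ^ j - 1) L]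
    have hsplit : exp (-c * x ^ p) = exp (-(c / 2) * x ^ p) / exp (c / 2 * x ^ p) := by
      rw [← exp_sub]; ring_nf
    have hdecay : exp (-(c / 2) * x ^ p) ≤ exp (-(c / 2) * L ^ p) := by
      have hLx : L ^ p ≤ x ^ p := rpow_le_rpow hL (le_max_right _ _) hp.le
      exact exp_le_exp.2 (by nlinarith)
    have hmain : (2 ^ j) ^ 2 * exp (-c * x ^ p) ≤ K * exp (-(c / 2) * L ^ p) := by
      rw [hsplit, mul_div_assoc', div_le_iff₀ (exp_pos _)]
      calc (2 ^ j) ^ 2 * exp (-(c / 2) * x ^ p)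
          ≤ (x + 1) ^ 2 * exp (-(c / 2) * L ^ p) := by gcongr
        _ ≤ K * exp (c / 2 * x ^ p) * exp (-(c / 2) * L ^ p) := by
            gcongr; exact hpoly x hx
        _ = _ := by ring
    calc (2 ^ (j + 1) + 1) * (C * exp (-c * x ^ p))
        ≤ 3 * C * ((2 ^ j) ^ 2 * exp (-c * x ^ p)) * (1 / 2) ^ j := by
          rw [one_div_pow, pow_succ]
          field_simp
          nlinarith [one_le_pow₀ (M₀ := ℝ) (n := j) one_le_two, exp_pos (-c * x ^ p)]
      _ ≤ 3 * C * (K * exp (-(c / 2) * L ^ p)) * (1 / 2) ^ j := by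
          have := mul_le_mul_of_nonneg_left hmain (by positivity : (0 : ℝ) ≤ 3 * C)
          exact mul_le_mul_of_nonneg_right this (by positivity)
      _ = B * (1 / 2) ^ j := by ring
  calc ∑' j : ℕ, ENNReal.ofReal (2 ^ (j + 1) + 1) *
        ENNReal.ofReal (C * exp (-c * max (2 ^ j - 1) L ^ p))
      ≤ ∑' j : ℕ, ENNReal.ofReal (B * (1 / 2) ^ j) := by
        refine ENNReal.tsum_le_tsum fun j => ?_
        rw [← ENNReal.ofReal_mul (by positivity)]
        exact ENNReal.ofReal_le_ofReal (hterm j)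
    _ = ENNReal.ofReal (6 * C * K * exp (-(c / 2) * L ^ p)) := by
        rw [← ENNReal.ofReal_tsum_of_nonneg (fun j => by positivity)
          (summable_geometric_two.mul_left B), tsum_mul_left, tsum_geometric_two]
        congr 1
        ring

theorem add_natCast_le_of_add_one_le {τ : ℕ → ℝ} (h : ∀ k, τ k + 1 ≤ τ (k + 1)) (k d : ℕ) :
    τ k + d ≤ τ (k + d) := by
  have hmono : Monotone fun k : ℕ => τ k - k :=
    monotone_nat_of_le_succ fun k => by push_cast; linarith [h k]
  have := hmono (Nat.le_add_right k d)
  push_cast at this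
  linarith

theorem tsum_indicator_Icc_le {τ : ℕ → ℝ} (h : ∀ k, τ k + 1 ≤ τ (k + 1)) (a b : ℝ) :
    ∑' k, (Icc a b).indicator (1 : ℝ → ENNReal) (τ k) ≤ ENNReal.ofReal (b - a + 1) := by
  classical
  by_cases hne : ∃ k, τ k ∈ Icc a b
  swap
  · push Not at hne
    simp [Set.indicator_of_notMem (hne _)]
  set k₀ := Nat.find hne
  have hk₀ : τ k₀ ∈ Icc a b := Nat.find_spec hne
  set m := ⌊b - a⌋₊
  have hsupp : ∀ k, τ k ∈ Icc a b → k ∈ Finset.Icc k₀ (k₀ + m) := by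
    intro k hk
    have hle : k₀ ≤ k := Nat.find_min' hne hk
    have hgap := add_natCast_le_of_add_one_le h k₀ (k - k₀)
    rw [Nat.add_sub_cancel' hle] at hgap
    have : k - k₀ ≤ m := Nat.le_floor (by linarith [hk₀.1, hk.2])
    rw [Finset.mem_Icc]
    omega
  calc ∑' k, (Icc a b).indicator (1 : ℝ → ENNReal) (τ k)
      = ∑ k ∈ Finset.Icc k₀ (k₀ + m), (Icc a b).indicator (1 : ℝ → ENNReal) (τ k) :=
        tsum_eq_sum fun k hk => Set.indicator_of_notMem (mt (hsupp k) hk) _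
    _ ≤ ∑ _k ∈ Finset.Icc k₀ (k₀ + m), (1 : ENNReal) :=
        Finset.sum_le_sum fun k _ => Set.indicator_le_self' (fun _ _ => zero_le) _
    _ = ((m + 1 : ℕ) : ENNReal) := by
        rw [Finset.sum_const, Nat.card_Icc, add_assoc, Nat.add_sub_cancel_left, nsmul_one]
    _ ≤ ENNReal.ofReal (b - a + 1) := by
        rw [← ENNReal.ofReal_natCast]
        refine ENNReal.ofReal_le_ofReal ?_
        push_cast
        linarith [Nat.floor_le (by linarith [hk₀.1, hk₀.2] : 0 ≤ b - a)]

theorem tsum_measure_preimage_Icc_le {Ω : Type*} {mΩ : MeasurableSpace Ω} (μ : Measure Ω)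
    {τ : ℕ → Ω → ℝ} (hτ : ∀ k, Measurable (τ k))
    (h : ∀ᵐ ω ∂μ, ∀ k, τ k ω + 1 ≤ τ (k + 1) ω) (a b : ℝ) :
    ∑' k, μ (τ k ⁻¹' Icc a b) ≤ ENNReal.ofReal (b - a + 1) * μ univ := by
  have hind (k : ℕ) : μ (τ k ⁻¹' Icc a b) = ∫⁻ ω, (Icc a b).indicator 1 (τ k ω) ∂μ := by
    rw [← lintegral_indicator_one ((hτ k) measurableSet_Icc)]
    rfl
  have hmeas (k : ℕ) : AEMeasurable (fun ω => (Icc a b).indicator (1 : ℝ → ENNReal) (τ k ω)) μ :=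
    ((measurable_const.indicator measurableSet_Icc).comp (hτ k)).aemeasurable
  simp_rw [hind]
  rw [← lintegral_tsum hmeas, ← lintegral_const]
  exact lintegral_mono_ae (h.mono fun ω hω => tsum_indicator_Icc_le hω a b)

theorem tsum_measure_renewal_inter_le {Ω β : Type*} {mΩ : MeasurableSpace Ω}
    [MeasurableSpace β] (μ : Measure Ω) [IsProbabilityMeasure μ]
    {τ : ℕ → Ω → ℝ} {f : ℕ → Ω → β} {Y : Ω → β} (hτ : ∀ k, Measurable (τ k))
    (hgrow : ∀ᵐ ω ∂μ, ∀ k, τ k ω + 1 ≤ τ (k + 1) ω) (hindep : ∀ k, IndepFun (τ k) (f k) μ)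
    (hident : ∀ k, IdentDistrib (f k) Y μ μ) (a b : ℝ) {S : Set β} (hS : MeasurableSet S) :
    ∑' k, μ (τ k ⁻¹' Icc a b ∩ f k ⁻¹' S) ≤ ENNReal.ofReal (b - a + 1) * μ (Y ⁻¹' S) := by
  have hterm (k : ℕ) : μ (τ k ⁻¹' Icc a b ∩ f k ⁻¹' S) = μ (τ k ⁻¹' Icc a b) * μ (Y ⁻¹' S) := by
    rw [(hindep k).measure_inter_preimage_eq_mul _ _ measurableSet_Icc hS,
      (hident k).measure_mem_eq hS]
  simp_rw [hterm, ENNReal.tsum_mul_right]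
  gcongr
  simpa using tsum_measure_preimage_Icc_le μ hτ hgrow a b

theorem ProbabilityTheory.iIndepFun.indepFun_sum_range_fst {Ω α β : Type*}
    {mΩ : MeasurableSpace Ω} {μ : Measure Ω} [AddCommMonoid α] [MeasurableSpace α] [MeasurableAdd₂ α] [MeasurableSpace β]
    {f : ℕ → Ω → α × β} (hindep : iIndepFun f μ) (hf : ∀ k, Measurable (f k)) (k : ℕ) :
    IndepFun (fun ω => ∑ i ∈ Finset.range k, (f i ω).1) (f k) μ := by
  have h := (hindep.indepFun_finset (Finset.range k) {k} (by simp) hf).comp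
    (φ := fun x => ∑ i, (x i).1) (ψ := fun y => y ⟨k, Finset.mem_singleton_self k⟩)
    (_mγ' := inferInstance) (by fun_prop) (by fun_prop)
  convert h using 1
  · ext ω
    exact (Finset.sum_coe_sort (Finset.range k) fun i => (f i ω).1).symm
  · rfl

theorem renewal_index_spec {τ : ℕ → ℝ} {t : ℝ} (h : ∀ k, τ k + 1 ≤ τ (k + 1)) (ht : τ 0 ≤ t) :
    τ (sSup {k | τ k ≤ t}) ≤ t ∧ t < τ (sSup {k | τ k ≤ t} + 1) := by
  have hbdd : BddAbove {k | τ k ≤ t} := ⟨⌊t - τ 0⌋₊, fun k hk => Nat.le_floor <| by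
    have := add_natCast_le_of_add_one_le h 0 k
    rw [zero_add] at this
    linarith [hk.out]⟩
  refine ⟨Nat.sSup_mem ⟨0, ht⟩ hbdd, lt_of_not_ge fun hle => ?_⟩
  have := le_csSup hbdd (show sSup {k | τ k ≤ t} + 1 ∈ {k | τ k ≤ t} from hle)
  omega

def dyadicTailSet (L : ℝ) (j : ℕ) : Set (ℝ × ℝ) := {q | 2 ^ j ≤ q.1 ∧ L < max q.1 q.2}

theorem measurableSet_dyadicTailSet (L : ℝ) (j : ℕ) : MeasurableSet (dyadicTailSet L j) :=
  (measurableSet_le measurable_const measurable_fst).inter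
    (measurableSet_lt measurable_const (measurable_fst.max measurable_snd))

theorem dyadicTailSet_subset (L : ℝ) (j : ℕ) :
    dyadicTailSet L j ⊆ {q | max (2 ^ j - 1) L < max q.1 q.2} := fun q hq =>
  max_lt (by linarith [hq.1, le_max_left q.1 q.2]) hq.2

theorem exists_dyadic_of_lt_max_overshoot {τ u m : ℕ → ℝ} {t L : ℝ} (hu : ∀ k, 1 ≤ u k)
    (hτ : ∀ k, τ (k + 1) = τ k + u k) (ht : τ 0 ≤ t)
    (hL : L < max (t - τ (sSup {k | τ k ≤ t})) (m (sSup {k | τ k ≤ t}))) :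
    ∃ j k : ℕ, τ k ∈ Icc (t - 2 ^ (j + 1)) t ∧ (u k, m k) ∈ dyadicTailSet L j := by
  set n := sSup {k | τ k ≤ t}
  obtain ⟨hn, hn_succ⟩ := renewal_index_spec (fun k => by rw [hτ]; linarith [hu k]) ht
  obtain ⟨j, hj, hj_succ⟩ := exists_nat_pow_near (hu n) one_lt_two
  rw [hτ] at hn_succ
  refine ⟨j, n, ⟨by linarith, hn⟩, hj, ?_⟩
  rcases lt_max_iff.1 hL with h | h
  · exact lt_max_of_lt_left (by linarith)
  · exact lt_max_of_lt_right h

theorem marked_renewal_overshoot_tail_general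
    {Ω : Type*} {mΩ : MeasurableSpace Ω}
    (μ : Measure Ω) [IsProbabilityMeasure μ]
    (U M : ℕ → Ω → ℝ)
    (hU_meas : ∀ k : ℕ, Measurable (U k)) (hM_meas : ∀ k : ℕ, Measurable (M k))
    (hU_one : ∀ k : ℕ, 1 ≤ k → ∀ᵐ ω ∂μ, 1 ≤ U k ω)
    (h_indep : iIndepFun
      (fun (k : ℕ) (ω : Ω) => (U (k + 1) ω, M (k + 1) ω)) μ)
    (h_ident : ∀ k : ℕ, IdentDistrib
      (fun ω => (U (k + 1) ω, M (k + 1) ω)) (fun ω => (U 1 ω, M 1 ω)) μ μ)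
    (c C p : ℝ) (hc : 0 < c) (hC : 0 < C) (hp : 0 < p)
    (h_tail : ∀ L : ℝ, 0 ≤ L →
      μ {ω | L < max (U 1 ω) (M 1 ω)} ≤ ENNReal.ofReal (C * Real.exp (-c * L ^ p)))
    (τ : ℕ → Ω → ℝ)
    (hτ : ∀ (k : ℕ) (ω : Ω), τ k ω = ∑ i ∈ Finset.range k, U (i + 1) ω)
    (N : ℝ → Ω → ℕ)
    (hN : ∀ (t : ℝ) (ω : Ω), N t ω = sSup {k : ℕ | τ k ω ≤ t}) :
    ∃ c' C' p' : ℝ, 0 < c' ∧ 0 < C' ∧ 0 < p' ∧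
      ∀ t : ℝ, 0 ≤ t → ∀ L : ℝ, 0 ≤ L →
        μ {ω | L < max (t - τ (N t ω) ω) (M (N t ω + 1) ω)}
          ≤ ENNReal.ofReal (C' * Real.exp (-c' * L ^ p')) := by
  obtain ⟨C', hC', hsum⟩ := exists_tsum_dyadic_tail_le hc hC hp
  refine ⟨c / 2, C', p, half_pos hc, hC', hp, fun t ht L hL => ?_⟩
  set f : ℕ → Ω → ℝ × ℝ := fun k ω => (U (k + 1) ω, M (k + 1) ω)
  have hf_meas (k : ℕ) : Measurable (f k) := (hU_meas _).prodMk (hM_meas _)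
  have hτ_eq (k : ℕ) : τ k = fun ω => ∑ i ∈ Finset.range k, (f i ω).1 := funext (hτ k)
  have hτ_meas (k : ℕ) : Measurable (τ k) := by rw [hτ_eq]; fun_prop
  have hτ_succ (k : ℕ) (ω : Ω) : τ (k + 1) ω = τ k ω + U (k + 1) ω := by
    simp only [hτ, Finset.sum_range_succ]
  have hU : ∀ᵐ ω ∂μ, ∀ k, 1 ≤ U (k + 1) ω := ae_all_iff.2 fun k => hU_one _ k.succ_pos
  have hgrow : ∀ᵐ ω ∂μ, ∀ k, τ k ω + 1 ≤ τ (k + 1) ω :=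
    hU.mono fun ω hω k => by linarith [hτ_succ k ω, hω k]
  have hcover : {ω | L < max (t - τ (N t ω) ω) (M (N t ω + 1) ω)} ≤ᵐ[μ]
      ⋃ j : ℕ, ⋃ k, τ k ⁻¹' Icc (t - 2 ^ (j + 1)) t ∩ f k ⁻¹' dyadicTailSet L j := by
    filter_upwards [hU] with ω hω hE
    replace hE : L < max (t - τ (N t ω) ω) (M (N t ω + 1) ω) := hE
    rw [hN] at hE
    obtain ⟨j, k, hj⟩ := exists_dyadic_of_lt_max_overshoot (τ := (τ · ω))
      (m := fun k => M (k + 1) ω) hω (hτ_succ · ω) (by simpa [hτ] using ht) hE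
    exact mem_iUnion₂.2 ⟨j, k, hj⟩
  calc μ {ω | L < max (t - τ (N t ω) ω) (M (N t ω + 1) ω)}
      ≤ ∑' j : ℕ, ∑' k, μ (τ k ⁻¹' Icc (t - 2 ^ (j + 1)) t ∩ f k ⁻¹' dyadicTailSet L j) :=
        (measure_mono_ae hcover).trans <| (measure_iUnion_le _).trans <|
          ENNReal.tsum_le_tsum fun j => measure_iUnion_le _
    _ ≤ ∑' j : ℕ, ENNReal.ofReal (2 ^ (j + 1) + 1) *
          ENNReal.ofReal (C * Real.exp (-c * max (2 ^ j - 1) L ^ p)) := by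
        refine ENNReal.tsum_le_tsum fun j => ?_
        have hrenewal := tsum_measure_renewal_inter_le μ hτ_meas hgrow
          (by simpa only [hτ_eq] using h_indep.indepFun_sum_range_fst hf_meas) h_ident
          (t - 2 ^ (j + 1)) t (measurableSet_dyadicTailSet L j)
        rw [sub_sub_cancel] at hrenewal
        refine hrenewal.trans (mul_le_mul_right ?_ _)
        exact (measure_mono (preimage_mono (dyadicTailSet_subset L j))).trans
          (h_tail _ (hL.trans (le_max_right _ _)))
    _ ≤ ENNReal.ofReal (C' * Real.exp (-(c / 2) * L ^ p)) := hsum L hL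

/-- **Marked renewal process.** Let `((U k, M k))_{k ≥ 1}` be i.i.d. with `U k ≥ 1` and
`M k ≥ 0` a.s., and with `ℙ(max (U 1) (M 1) > L) ≤ C e^{−c L^p}`. With `τ k := U 1 + ⋯ + U k`
and `N t := max {k | τ k ≤ t}`, there exist `c', C', p' > 0` such that for every `t ≥ 0`
and `L ≥ 0`, `ℙ(max (t − τ (N t)) (M (N t + 1)) > L) ≤ C' e^{−c' L^{p'}}`. -/
theorem marked_renewal_overshoot_tail
    {Ω : Type*} {mΩ : MeasurableSpace Ω}
    (μ : Measure Ω) [IsProbabilityMeasure μ]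
    (U M : ℕ → Ω → ℝ)
    (hU_meas : ∀ k : ℕ, Measurable (U k)) (hM_meas : ∀ k : ℕ, Measurable (M k))
    (hU_one : ∀ k : ℕ, 1 ≤ k → ∀ᵐ ω ∂μ, 1 ≤ U k ω)
    (hM_nonneg : ∀ k : ℕ, 1 ≤ k → ∀ᵐ ω ∂μ, 0 ≤ M k ω)
    (h_indep : iIndepFun
      (fun (k : ℕ) (ω : Ω) => (U (k + 1) ω, M (k + 1) ω)) μ)
    (h_ident : ∀ k : ℕ, IdentDistrib
      (fun ω => (U (k + 1) ω, M (k + 1) ω)) (fun ω => (U 1 ω, M 1 ω)) μ μ)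
    (c C p : ℝ) (hc : 0 < c) (hC : 0 < C) (hp : 0 < p)
    (h_tail : ∀ L : ℝ, 0 ≤ L →
      μ {ω | L < max (U 1 ω) (M 1 ω)} ≤ ENNReal.ofReal (C * Real.exp (-c * L ^ p)))
    (τ : ℕ → Ω → ℝ)
    (hτ : ∀ (k : ℕ) (ω : Ω), τ k ω = ∑ i ∈ Finset.range k, U (i + 1) ω)
    (N : ℝ → Ω → ℕ)
    (hN : ∀ (t : ℝ) (ω : Ω), N t ω = sSup {k : ℕ | τ k ω ≤ t}) :
    ∃ c' C' p' : ℝ, 0 < c' ∧ 0 < C' ∧ 0 < p' ∧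
      ∀ t : ℝ, 0 ≤ t → ∀ L : ℝ, 0 ≤ L →
        μ {ω | L < max (t - τ (N t ω) ω) (M (N t ω + 1) ω)}
          ≤ ENNReal.ofReal (C' * Real.exp (-c' * L ^ p')) :=
  marked_renewal_overshoot_tail_general (mΩ := mΩ) μ U M hU_meas hM_meas hU_one h_indep h_ident c C
    p hc hC hp h_tail τ hτ N hN
end

section
/- Assume: (a) there exists p₀ > 0 such that for every n ∈ ℕ, ℙ(T_n = 1 and D_n = −∞ | 𝓕_{n−1}) ≥ p₀ almost surely; and (b) there exist constants c, C, q > 0 such that for every m ≥ 1, ℙ(D_m > m − 1 | 𝓕_{m−1}) ≤ C e^{−c (m−1)^q} almost surely. Then ℙ(κ_0 = ∞) > 0. -/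
open MeasureTheory ProbabilityTheory Set Filter Topology Asymptotics

/-! Fix `N` and let `G` be the event that the steps `0, …, N` all have `T = 1` and `D = -∞`;
iterating (a) through the tower property gives `ℙ(G) ≥ p₀ ^ (N + 1) > 0`, and no crossing
happens on `G` before time `N + 1`. Since `T ≥ 1`, a crossing at a later time `m` forces
`D m > m - 1`, and since `G` is `𝓕_{m-1}`-measurable, (b) gives
`ℙ(G ∩ {D m > m - 1}) ≤ C e^{-c (m-1)^q} ℙ(G)`. These bounds are summable in `m`, so for `N`
large their tail is `< 1` and `G` occurs without any crossing with positive probability. -/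

lemma summable_exp_neg_mul_rpow {c q : ℝ} (hc : 0 < c) (hq : 0 < q) :
    Summable fun n : ℕ => Real.exp (-c * (n : ℝ) ^ q) := by
  have hpow : Tendsto (fun n : ℕ => (n : ℝ) ^ q) atTop atTop :=
    (tendsto_rpow_atTop hq).comp tendsto_natCast_atTop_atTop
  have ho : (fun n : ℕ => Real.exp (-c * (n : ℝ) ^ q)) =o[atTop]
      fun n : ℕ => (n : ℝ) ^ (-2 : ℝ) := by
    refine ((isLittleO_exp_neg_mul_rpow_atTop hc (-2 / q)).comp_tendsto hpow).congr_right
      fun n => ?_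
    simp only [Function.comp, ← Real.rpow_mul n.cast_nonneg]
    congr 1
    field_simp
  exact summable_of_isBigO_nat (Real.summable_nat_rpow.mpr (by norm_num)) ho.isBigO

section CondExp

variable {Ω : Type*} {m mΩ : MeasurableSpace Ω} {μ : Measure Ω} [IsFiniteMeasure μ]
  {s t : Set Ω}

lemma setIntegral_condExp_indicator_one (hm : m ≤ mΩ) (hs : MeasurableSet[m] s)
    (ht : MeasurableSet t) :
    ∫ ω in s, μ[t.indicator (fun _ => (1 : ℝ)) | m] ω ∂μ = μ.real (s ∩ t) := by
  rw [setIntegral_condExp hm ((integrable_const 1).indicator ht) hs, setIntegral_indicator ht,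
    setIntegral_const, smul_eq_mul, mul_one]

lemma mul_measureReal_le_measureReal_inter_of_le_condExp (hm : m ≤ mΩ)
    (hs : MeasurableSet[m] s) (ht : MeasurableSet t) {p : ℝ}
    (hp : ∀ᵐ ω ∂μ, p ≤ μ[t.indicator (fun _ => (1 : ℝ)) | m] ω) :
    p * μ.real s ≤ μ.real (s ∩ t) := by
  rw [← setIntegral_condExp_indicator_one hm hs ht, mul_comm, ← smul_eq_mul,
    ← setIntegral_const]
  exact setIntegral_mono_ae (integrable_const p).integrableOn integrable_condExp.integrableOn hp

lemma measureReal_inter_le_mul_of_condExp_le (hm : m ≤ mΩ)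
    (hs : MeasurableSet[m] s) (ht : MeasurableSet t) {p : ℝ}
    (hp : ∀ᵐ ω ∂μ, μ[t.indicator (fun _ => (1 : ℝ)) | m] ω ≤ p) :
    μ.real (s ∩ t) ≤ p * μ.real s := by
  rw [← setIntegral_condExp_indicator_one hm hs ht, mul_comm, ← smul_eq_mul,
    ← setIntegral_const]
  exact setIntegral_mono_ae integrable_condExp.integrableOn (integrable_const p).integrableOn hp

end CondExp

section Filtration

variable {Ω : Type*} {mΩ : MeasurableSpace Ω} {μ : Measure Ω} [IsFiniteMeasure μ]
  {ℱ : Filtration ℕ mΩ}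

lemma measurableSet_biInter_range_of_adapted {A : ℕ → Set Ω}
    (hA : ∀ n, MeasurableSet[ℱ n] (A n)) (N : ℕ) :
    MeasurableSet[ℱ N] (⋂ i ∈ Finset.range (N + 1), A i) :=
  Finset.measurableSet_biInter _ fun i hi =>
    ℱ.mono (Nat.lt_succ_iff.mp (Finset.mem_range.mp hi)) _ (hA i)

lemma pow_le_measureReal_biInter_range {A : ℕ → Set Ω} (hA : ∀ n, MeasurableSet[ℱ n] (A n))
    {p : ℝ} (hp : 0 ≤ p) (h0 : p ≤ μ.real (A 0))
    (hstep : ∀ n, ∀ᵐ ω ∂μ,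
      p ≤ μ[(A (n + 1)).indicator (fun _ => (1 : ℝ)) | ℱ n] ω) (N : ℕ) :
    p ^ (N + 1) ≤ μ.real (⋂ i ∈ Finset.range (N + 1), A i) := by
  induction N with
  | zero => simpa using h0
  | succ N ih =>
    rw [Finset.range_add_one (n := N + 1), Finset.set_biInter_insert, inter_comm, pow_succ']
    calc p * p ^ (N + 1) ≤ p * μ.real (⋂ i ∈ Finset.range (N + 1), A i) :=
          mul_le_mul_of_nonneg_left ih hp
      _ ≤ _ := mul_measureReal_le_measureReal_inter_of_le_condExp (ℱ.le N)
          (measurableSet_biInter_range_of_adapted hA N) (ℱ.le _ _ (hA _)) (hstep N)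

lemma measure_inter_iUnion_le_ofReal_tsum_mul {s : Set Ω} {B : ℕ → Set Ω} {g : ℕ → ℝ}
    {N : ℕ} (hs : MeasurableSet[ℱ N] s) (hB : ∀ n, MeasurableSet (B n)) (hg : Summable g)
    (hg0 : ∀ n, 0 ≤ g n)
    (hb : ∀ n, ∀ᵐ ω ∂μ,
      μ[(B (n + 1)).indicator (fun _ => (1 : ℝ)) | ℱ n] ω ≤ g n) :
    μ (s ∩ ⋃ k, B (k + N + 1)) ≤ ENNReal.ofReal (∑' k, g (k + N)) * μ s := by
  have hterm : ∀ k, μ (s ∩ B (k + N + 1)) ≤ ENNReal.ofReal (g (k + N)) * μ s := by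
    intro k
    rw [← ofReal_measureReal, ← ofReal_measureReal, ← ENNReal.ofReal_mul (hg0 _)]
    exact ENNReal.ofReal_le_ofReal <| measureReal_inter_le_mul_of_condExp_le (ℱ.le _)
      (ℱ.mono (Nat.le_add_left N k) _ hs) (hB _) (hb _)
  calc μ (s ∩ ⋃ k, B (k + N + 1)) ≤ ∑' k, μ (s ∩ B (k + N + 1)) := by
        rw [inter_iUnion]; exact measure_iUnion_le _
    _ ≤ ∑' k, ENNReal.ofReal (g (k + N)) * μ s := ENNReal.tsum_le_tsum hterm
    _ = ENNReal.ofReal (∑' k, g (k + N)) * μ s := by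
        rw [ENNReal.tsum_mul_right, ENNReal.ofReal_tsum_of_nonneg (fun k => hg0 _)
          ((summable_nat_add_iff N).mpr hg)]

end Filtration

/-- `κ₀` for the paths `t = T · ω`, `d = D · ω`. -/
noncomputable def firstCrossing (t : ℕ → ℝ) (d : ℕ → EReal) : ℕ∞ :=
  sInf {x : ℕ∞ | ∃ m : ℕ, x = (m : ℕ∞) ∧
    ((∑ i ∈ Finset.range m, t i : ℝ) : EReal) ≤ d m}

lemma firstCrossing_eq_top {t : ℕ → ℝ} {d : ℕ → EReal} (ht : ∀ i, 1 ≤ t i)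
    (hd : ∀ m : ℕ, d m < ((m : ℝ) : EReal)) : firstCrossing t d = ⊤ := by
  refine sInf_eq_top.mpr ?_
  rintro _ ⟨m, rfl, hm⟩
  have hsum : (m : ℝ) ≤ ∑ i ∈ Finset.range m, t i := by
    simpa using Finset.card_nsmul_le_sum (Finset.range m) t 1 fun i _ => ht i
  exact absurd ((hd m).trans_le (EReal.coe_le_coe_iff.mpr hsum)) hm.not_gt

theorem kappa_zero_infinite_with_positive_probability_general
    {Ω : Type*} {mΩ : MeasurableSpace Ω}
    (μ : Measure Ω) [IsProbabilityMeasure μ]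
    (ℱ : Filtration ℕ mΩ)
    (T : ℕ → Ω → ℝ) (D : ℕ → Ω → EReal)
    (hT_adapted : ∀ n : ℕ, Measurable[ℱ n] (T n))
    (hD_adapted : ∀ n : ℕ, Measurable[ℱ n] (D n))
    (hT_one : ∀ (n : ℕ) (ω : Ω), 1 ≤ T n ω)
    (p₀ : ℝ) (hp₀ : 0 < p₀)
    (ha0 : ENNReal.ofReal p₀ ≤ μ {ω | T 0 ω = 1 ∧ D 0 ω = ⊥})
    (ha : ∀ n : ℕ, 1 ≤ n → ∀ᵐ ω ∂μ,
      p₀ ≤ (μ[({ω' | T n ω' = 1 ∧ D n ω' = ⊥}).indicator (fun _ => (1 : ℝ)) |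
        ℱ (n - 1)]) ω)
    (c C q : ℝ) (hc : 0 < c) (hC : 0 < C) (hq : 0 < q)
    (hb : ∀ m : ℕ, 1 ≤ m → ∀ᵐ ω ∂μ,
      (μ[({ω' | (((m : ℝ) - 1 : ℝ) : EReal) < D m ω'}).indicator (fun _ => (1 : ℝ)) |
        ℱ (m - 1)]) ω ≤ C * Real.exp (-c * ((m : ℝ) - 1) ^ q)) :
    0 < μ {ω | sInf {x : ℕ∞ | ∃ m : ℕ, x = (m : ℕ∞) ∧
        ((∑ i ∈ Finset.range m, T i ω : ℝ) : EReal) ≤ D m ω} = ⊤} := by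
  set A : ℕ → Set Ω := fun n => {ω | T n ω = 1 ∧ D n ω = ⊥}
  set B : ℕ → Set Ω := fun m => {ω | (((m : ℝ) - 1 : ℝ) : EReal) < D m ω}
  set g : ℕ → ℝ := fun n => C * Real.exp (-c * (n : ℝ) ^ q)
  have hA : ∀ n, MeasurableSet[ℱ n] (A n) := fun n =>
    (hT_adapted n (measurableSet_singleton 1)).inter (hD_adapted n (measurableSet_singleton ⊥))
  have hB : ∀ m, MeasurableSet (B m) := fun m => ℱ.le m _ (hD_adapted m measurableSet_Ioi)
  have hA_step : ∀ n, ∀ᵐ ω ∂μ,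
      p₀ ≤ μ[(A (n + 1)).indicator (fun _ => (1 : ℝ)) | ℱ n] ω :=
    fun n => by simpa using ha (n + 1) n.succ_pos
  have hB_step : ∀ n, ∀ᵐ ω ∂μ,
      μ[(B (n + 1)).indicator (fun _ => (1 : ℝ)) | ℱ n] ω ≤ g n :=
    fun n => by
      simpa only [B, Nat.add_sub_cancel, Nat.cast_succ, add_sub_cancel_right] using
        hb (n + 1) n.succ_pos
  obtain ⟨N, hN⟩ : ∃ N, ∑' k, g (k + N) < 1 :=
    ((tendsto_sum_nat_add g).eventually (gt_mem_nhds one_pos)).exists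
  set G := ⋂ i ∈ Finset.range (N + 1), A i
  set U := ⋃ k, B (k + N + 1)
  have hG : 0 < μ G := by
    have h0 : p₀ ≤ μ.real (A 0) :=
      (ENNReal.ofReal_le_iff_le_toReal (measure_ne_top μ _)).mp ha0
    have := pow_le_measureReal_biInter_range hA hp₀.le h0 hA_step N
    exact (ENNReal.toReal_pos_iff.mp ((pow_pos hp₀ _).trans_le this)).1
  have hGU : μ (G ∩ U) < μ G :=
    calc μ (G ∩ U) ≤ ENNReal.ofReal (∑' k, g (k + N)) * μ G :=
          measure_inter_iUnion_le_ofReal_tsum_mul (measurableSet_biInter_range_of_adapted hA N)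
            hB ((summable_exp_neg_mul_rpow hc hq).mul_left C) (fun n => by positivity) hB_step
      _ < 1 * μ G :=
          ENNReal.mul_lt_mul_left hG.ne' (measure_ne_top μ _) (ENNReal.ofReal_lt_one.mpr hN)
      _ = μ G := one_mul _
  have hGU_pos : 0 < μ (G \ U) := by
    refine pos_iff_ne_zero.mpr fun h => hGU.not_ge ?_
    simpa [h] using measure_le_inter_add_sdiff μ G U
  refine hGU_pos.trans_le (measure_mono fun ω ⟨hωG, hωU⟩ =>
    firstCrossing_eq_top (hT_one · ω) fun m => ?_)
  rcases le_or_gt m N with hm | hm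
  · have hD : D m ω = ⊥ :=
      (mem_iInter₂.mp hωG m (Finset.mem_range.mpr (Nat.lt_succ_of_le hm))).2
    exact hD ▸ EReal.bot_lt_coe _
  · have hωB : ω ∉ B m := fun h =>
      hωU (mem_iUnion.mpr ⟨m - N - 1, by rwa [show m - N - 1 + N + 1 = m by omega]⟩)
    exact (not_lt.mp hωB).trans_lt (EReal.coe_lt_coe_iff.mpr (by linarith))

/-- Let `(T n)` (values in `[1,∞)`) and `(D n)` (values in `[−∞,∞)`, encoded in `EReal`
with `D n ≠ ⊤`) be adapted to a filtration `ℱ`. Assume (a) there exists `p₀ > 0` with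
`ℙ(T n = 1 ∧ D n = −∞ | 𝓕 (n−1)) ≥ p₀` a.s. for every `n` (for `n = 0` this is the
unconditional probability, since `𝓕 (−1)` is trivial); and (b) there exist `c, C, q > 0`
such that `ℙ(D m > m − 1 | 𝓕 (m−1)) ≤ C e^{−c (m−1)^q}` a.s. for every `m ≥ 1`. Then
`ℙ(κ 0 = ∞) > 0`, where `κ 0 := inf {m : D m ≥ T 0 + ⋯ + T (m−1)}`. -/
theorem kappa_zero_infinite_with_positive_probability
    {Ω : Type*} {mΩ : MeasurableSpace Ω}
    (μ : Measure Ω) [IsProbabilityMeasure μ]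
    (ℱ : Filtration ℕ mΩ)
    (T : ℕ → Ω → ℝ) (D : ℕ → Ω → EReal)
    (hT_adapted : ∀ n : ℕ, Measurable[ℱ n] (T n))
    (hD_adapted : ∀ n : ℕ, Measurable[ℱ n] (D n))
    (hT_one : ∀ (n : ℕ) (ω : Ω), 1 ≤ T n ω)
    (hD_top : ∀ (n : ℕ) (ω : Ω), D n ω ≠ ⊤)
    (p₀ : ℝ) (hp₀ : 0 < p₀)
    (ha0 : ENNReal.ofReal p₀ ≤ μ {ω | T 0 ω = 1 ∧ D 0 ω = ⊥})
    (ha : ∀ n : ℕ, 1 ≤ n → ∀ᵐ ω ∂μ,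
      p₀ ≤ (μ[({ω' | T n ω' = 1 ∧ D n ω' = ⊥}).indicator (fun _ => (1 : ℝ)) |
        ℱ (n - 1)]) ω)
    (c C q : ℝ) (hc : 0 < c) (hC : 0 < C) (hq : 0 < q)
    (hb : ∀ m : ℕ, 1 ≤ m → ∀ᵐ ω ∂μ,
      (μ[({ω' | (((m : ℝ) - 1 : ℝ) : EReal) < D m ω'}).indicator (fun _ => (1 : ℝ)) |
        ℱ (m - 1)]) ω ≤ C * Real.exp (-c * ((m : ℝ) - 1) ^ q)) :
    0 < μ {ω | sInf {x : ℕ∞ | ∃ m : ℕ, x = (m : ℕ∞) ∧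
        ((∑ i ∈ Finset.range m, T i ω : ℝ) : EReal) ≤ D m ω} = ⊤} :=
  kappa_zero_infinite_with_positive_probability_general μ ℱ T D hT_adapted hD_adapted hT_one p₀ hp₀
    ha0 ha c C q hc hC hq hb
end
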